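/- arXiv:1407.8009 — 6 statements merged into one kernel-verified Lean document; each statement's English description precedes it below -/
import Mathlib

section
/- The relation ≤_{C,+,sto} is antisymmetric: if μ, ν ∈ M satisfy both μ ≤_{C,+,sto} ν and ν ≤_{C,+,sto} μ, then μ = ν. (Consequently all seven relations ≤_+, ≤_sto, ≤_C, ≤_{C,+}, ≤_{+,sto}, ≤_{C,sto}, ≤_{C,+,sto}, being clearly reflexive and transitive, are partial orders on M.) -/
open MeasureTheory Set Filter ProbabilityTheory

noncomputable section

/-- A function has at most linear growth. -/
def LinGrowth (φ : ℝ → ℝ) : Prop := ∃ C : ℝ, ∀ x : ℝ, |φ x| ≤ C * (1 + |x|)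

/-- Membership in `M`: finite positive Borel measure on `ℝ` with finite first moment. -/
def MemM (μ : Measure ℝ) : Prop := IsFiniteMeasure μ ∧ Integrable (fun x => x) μ

/-- Stochastic order `≤_sto`. -/
def leSto (μ ν : Measure ℝ) : Prop :=
  ∀ φ : ℝ → ℝ, LinGrowth φ → Monotone φ → ∫ x, φ x ∂μ ≤ ∫ x, φ x ∂ν

/-- Convex order `≤_C`. -/
def leC (μ ν : Measure ℝ) : Prop :=
  ∀ φ : ℝ → ℝ, LinGrowth φ → ConvexOn ℝ Set.univ φ → ∫ x, φ x ∂μ ≤ ∫ x, φ x ∂ν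

/-- Order `≤_{C,+}` (extended order). -/
def leCP (μ ν : Measure ℝ) : Prop :=
  ∀ φ : ℝ → ℝ, LinGrowth φ → ConvexOn ℝ Set.univ φ → (∀ x, 0 ≤ φ x) →
    ∫ x, φ x ∂μ ≤ ∫ x, φ x ∂ν

/-- Order `≤_{sto,+}`. -/
def leStoP (μ ν : Measure ℝ) : Prop :=
  ∀ φ : ℝ → ℝ, LinGrowth φ → Monotone φ → (∀ x, 0 ≤ φ x) →
    ∫ x, φ x ∂μ ≤ ∫ x, φ x ∂ν

/-- Order `≤_{C,sto}`. -/
def leCS (μ ν : Measure ℝ) : Prop :=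
  ∀ φ : ℝ → ℝ, LinGrowth φ → ConvexOn ℝ Set.univ φ → Monotone φ →
    ∫ x, φ x ∂μ ≤ ∫ x, φ x ∂ν

/-- Order `≤_{C,+,sto}`. -/
def leCPS (μ ν : Measure ℝ) : Prop :=
  ∀ φ : ℝ → ℝ, LinGrowth φ → ConvexOn ℝ Set.univ φ → (∀ x, 0 ≤ φ x) → Monotone φ →
    ∫ x, φ x ∂μ ≤ ∫ x, φ x ∂ν

/-- The Kantorovich distance. -/
def W (μ ν : Measure ℝ) : ℝ :=
  sSup {d : ℝ | ∃ f : ℝ → ℝ, LipschitzWith 1 f ∧ d = |∫ x, f x ∂μ - ∫ x, f x ∂ν|}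

/-- Quantile function `G_ν`. -/
def quantile (ν : Measure ℝ) (t : ℝ) : ℝ := sInf {x : ℝ | t ≤ (ν (Set.Iic x)).toReal}

/-- `IsShadow μ ν η` means `η = S^ν(μ)`, the shadow of `μ` in `ν`. -/
def IsShadow (μ ν η : Measure ℝ) : Prop :=
  leC μ η ∧ η ≤ ν ∧ ∀ η' : Measure ℝ, leC μ η' → η' ≤ ν → leC η η'

/-- `Top(μ,ν)`: pushforward of Lebesgue measure on `(0, m]` by `max (G_μ) (G_ν)`. -/
def TopMeas (μ ν : Measure ℝ) : Measure ℝ :=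
  Measure.map (fun t => max (quantile μ t) (quantile ν t))
    (volume.restrict (Set.Ioc (0:ℝ) (μ Set.univ).toReal))

/-- `Down(μ,ν)`: pushforward of Lebesgue measure on `(0, m]` by `min (G_μ) (G_ν)`. -/
def DownMeas (μ ν : Measure ℝ) : Measure ℝ :=
  Measure.map (fun t => min (quantile μ t) (quantile ν t))
    (volume.restrict (Set.Ioc (0:ℝ) (μ Set.univ).toReal))

/-- Support of a measure on a topological space. -/
def mSupport {α : Type*} [TopologicalSpace α] [MeasurableSpace α] (μ : Measure α) : Set α :=
  {x | ∀ U ∈ nhds x, μ U ≠ 0}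

/-- Positive part (Jordan decomposition) of the signed measure `η - μ`. -/
def posPartSub (η μ : Measure ℝ) [IsFiniteMeasure η] [IsFiniteMeasure μ] : Measure ℝ :=
  (η.toSignedMeasure - μ.toSignedMeasure).toJordanDecomposition.posPart

/-- `π` is a martingale coupling of `μ` and `ν`. -/
def IsMartCoupling (π : Measure (ℝ × ℝ)) (μ ν : Measure ℝ) : Prop :=
  IsProbabilityMeasure π ∧ π.fst = μ ∧ π.snd = ν ∧
    ∀ f : ℝ → ℝ, Continuous f → (∃ C : ℝ, ∀ x, |f x| ≤ C) →
      ∫ p : ℝ × ℝ, f p.1 * (p.2 - p.1) ∂π = 0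

/-- A coupling is left-monotone. -/
def LeftMonotone (π : Measure (ℝ × ℝ)) : Prop :=
  ∃ Γ : Set (ℝ × ℝ), MeasurableSet Γ ∧ π Γ = 1 ∧
    ∀ x ym yp x' y' : ℝ, (x, ym) ∈ Γ → (x, yp) ∈ Γ → (x', y') ∈ Γ →
      x < x' → ym < yp → y' ∉ Set.Ioo ym yp

/-- The set `A` of points `x` with `π((-∞,x) × (x,∞)) = 0`. -/
def jumpSet (π : Measure (ℝ × ℝ)) : Set ℝ := {x | π (Set.Iio x ×ˢ Set.Ioi x) = 0}

/-- The set `A⁻` of points of `A` isolated on the right in `A`. -/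
def jumpSetMinus (π : Measure (ℝ × ℝ)) : Set ℝ :=
  {x ∈ jumpSet π | ∃ ε > 0, Set.Ioo x (x + ε) ∩ jumpSet π = ∅}

/-- Normalised fiber measure `π_x`. -/
def fiberMeasure (π : Measure (ℝ × ℝ)) (x : ℝ) : Measure ℝ :=
  (π.fst {x})⁻¹ • Measure.snd (π.restrict ({x} ×ˢ Set.univ))

/-- The reduced support `spt* π`. -/
def sptStar (π : Measure (ℝ × ℝ)) : Set (ℝ × ℝ) :=
  (mSupport π \ (jumpSetMinus π ×ˢ (Set.univ : Set ℝ))) ∪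
    ⋃ x ∈ {x : ℝ | 0 < π.fst {x}}, {x} ×ˢ mSupport (fiberMeasure π x)



lemma hockey_convex (c : ℝ) : ConvexOn ℝ Set.univ (fun x => max (x - c) 0) := by
  have h1 : ConvexOn ℝ Set.univ (fun x : ℝ => x - c) :=
    (convexOn_id convex_univ).sub (concaveOn_const c convex_univ)
  exact h1.sup (convexOn_const 0 convex_univ)

lemma hockey_lin (c : ℝ) : LinGrowth (fun x => max (x - c) 0) := by
  refine ⟨1 + |c|, fun x => ?_⟩
  have h1 : |max (x - c) 0| ≤ |x - c| := by
    rw [abs_le]; constructor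
    · have := abs_nonneg (x - c); have := le_max_right (x - c) (0:ℝ); linarith
    · exact le_trans (max_le (le_abs_self _) (abs_nonneg _)) le_rfl
  have h2 : |x - c| ≤ |x| + |c| := abs_sub _ _
  have h3 : (1 + |c|) * (1 + |x|) = 1 + |x| + |c| + |c| * |x| := by ring
  have h4 : 0 ≤ |c| * |x| := mul_nonneg (abs_nonneg _) (abs_nonneg _)
  linarith

lemma hockey_mono (c : ℝ) : Monotone (fun x => max (x - c) 0) :=
  fun x y hxy => max_le_max (by linarith) le_rfl

lemma hockey_int (μ : Measure ℝ) (hμ : MemM μ) (c : ℝ) :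
    Integrable (fun x => max (x - c) 0) μ := by
  haveI := hμ.1
  exact (hμ.2.sub (integrable_const c)).pos_part

/-- the relation `≤_{C,+,sto}` is antisymmetric on `M`. -/
theorem leCPS_antisymm (μ ν : Measure ℝ) (hμ : MemM μ) (hν : MemM ν)
    (h₁ : leCPS μ ν) (h₂ : leCPS ν μ) : μ = ν := by
  haveI := hμ.1; haveI := hν.1
  -- equality of integrals of hockey sticks
  have hock : ∀ c : ℝ, ∫ x, max (x - c) 0 ∂μ = ∫ x, max (x - c) 0 ∂ν := by
    intro c
    have A := h₁ _ (hockey_lin c) (hockey_convex c) (fun x => le_max_right _ _) (hockey_mono c)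
    have B := h₂ _ (hockey_lin c) (hockey_convex c) (fun x => le_max_right _ _) (hockey_mono c)
    linarith
  -- equality of total masses
  have mass : μ Set.univ = ν Set.univ := by
    have lg : LinGrowth (fun _ : ℝ => (1:ℝ)) := ⟨1, fun x => by
      have := abs_nonneg x; rw [abs_one]; nlinarith⟩
    have A := h₁ _ lg (convexOn_const 1 convex_univ) (fun _ => zero_le_one) monotone_const
    have B := h₂ _ lg (convexOn_const 1 convex_univ) (fun _ => zero_le_one) monotone_const
    simp only [integral_const, smul_eq_mul, mul_one] at A B
    have hμf := measure_lt_top μ Set.univ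
    have hνf := measure_lt_top ν Set.univ
    have : (μ Set.univ).toReal = (ν Set.univ).toReal := le_antisymm A B
    exact (ENNReal.toReal_eq_toReal_iff' hμf.ne hνf.ne).mp this
  -- equality on Ioi a
  have ioi : ∀ a : ℝ, μ (Set.Ioi a) = ν (Set.Ioi a) := by
    intro a
    -- approximating sequence
    set f : ℕ → ℝ → ℝ := fun n x => min ((n + 1) * max (x - a) 0) 1 with hf
    set F : ℝ → ℝ := Set.indicator (Set.Ioi a) (fun _ => (1:ℝ)) with hF
    have key : ∀ n x, f n x =
        (max (x - a) 0 - max (x - (a + 1 / (n + 1))) 0) * (n + 1) := by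
      intro n x
      have hn : (0:ℝ) < n + 1 := by positivity
      have hinv : (0:ℝ) < 1 / ((n:ℝ) + 1) := by positivity
      have hmul : ((n:ℝ) + 1) * (1 / ((n:ℝ) + 1)) = 1 := by field_simp
      rcases le_or_gt x a with h | h
      · have e1 : max (x - a) 0 = 0 := max_eq_right (by linarith)
        have e2 : max (x - (a + 1 / (n+1))) 0 = 0 := max_eq_right (by linarith)
        simp only [hf]
        rw [e1, e2, mul_zero, min_eq_left zero_le_one]
        ring
      · have e1 : max (x - a) 0 = x - a := max_eq_left (by linarith)
        rcases le_or_gt x (a + 1 / (n + 1)) with h2 | h2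
        · have e2 : max (x - (a + 1 / (n+1))) 0 = 0 := max_eq_right (by linarith)
          have e3 : min ((n + 1) * (x - a)) 1 = (n + 1) * (x - a) := by
            apply min_eq_left; nlinarith
          simp only [hf, e1, e2]
          rw [e3]; ring
        · have e2 : max (x - (a + 1 / (n+1))) 0 = x - (a + 1 / (n+1)) := by
            apply max_eq_left; linarith
          have e3 : min ((n + 1) * (x - a)) 1 = 1 := by
            apply min_eq_right; nlinarith
          simp only [hf, e1, e2]
          rw [e3]; linarith [hmul]
    have fint : ∀ (κ : Measure ℝ), MemM κ → ∀ n, Integrable (f n) κ := by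
      intro κ hκ n
      have : Integrable (fun x =>
          (max (x - a) 0 - max (x - (a + 1 / (n + 1))) 0) * (n + 1)) κ :=
        ((hockey_int κ hκ a).sub (hockey_int κ hκ _)).mul_const _
      exact this.congr (Filter.Eventually.of_forall fun x => (key n x).symm)
    have feq : ∀ n, ∫ x, f n x ∂μ = ∫ x, f n x ∂ν := by
      intro n
      have e : ∀ (κ : Measure ℝ), MemM κ → ∫ x, f n x ∂κ =
          ((∫ x, max (x - a) 0 ∂κ) - ∫ x, max (x - (a + 1 / (n + 1))) 0 ∂κ) * (n + 1) := by
        intro κ hκ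
        rw [show (∫ x, f n x ∂κ) = ∫ x,
            (max (x - a) 0 - max (x - (a + 1 / (n + 1))) 0) * (n + 1) ∂κ from
          integral_congr_ae (Filter.Eventually.of_forall fun x => key n x)]
        rw [integral_mul_const, integral_sub (hockey_int κ hκ a) (hockey_int κ hκ _)]
      rw [e μ hμ, e ν hν, hock a, hock (a + 1 / (n + 1))]
    have fmono : ∀ x : ℝ, Monotone fun n => f n x := by
      intro x n m hnm
      apply min_le_min _ le_rfl
      apply mul_le_mul_of_nonneg_right _ (le_max_right _ _)
      have : (n:ℝ) ≤ m := Nat.cast_le.mpr hnm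
      linarith
    have ftend : ∀ x : ℝ, Tendsto (fun n => f n x) atTop (nhds (F x)) := by
      intro x
      rcases le_or_gt x a with h | h
      · have : ∀ n, f n x = 0 := by
          intro n
          have e1 : max (x - a) 0 = 0 := max_eq_right (by linarith)
          simp [hf, e1]
        rw [show F x = 0 by simp [hF, Set.indicator_apply, not_lt.mpr h]]
        simp only [this]; exact tendsto_const_nhds
      · have hFx : F x = 1 := by simp [hF, Set.indicator_apply, h]
        rw [hFx]
        apply Tendsto.congr' _ tendsto_const_nhds
        have hxa : 0 < x - a := by linarith
        obtain ⟨N, hN⟩ := exists_nat_ge (1 / (x - a))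
        filter_upwards [Filter.eventually_ge_atTop N] with n hn
        have e1 : max (x - a) 0 = x - a := max_eq_left (by linarith)
        have h1 : (1:ℝ) ≤ (n + 1) * (x - a) := by
          have : (N:ℝ) ≤ n := Nat.cast_le.mpr hn
          have h2 : 1 / (x - a) ≤ (n:ℝ) + 1 := by linarith
          rw [div_le_iff₀ hxa] at h2
          nlinarith
        simp [hf, e1, min_eq_right h1]
    have Fintμ : Integrable F μ :=
      (integrable_const (1:ℝ)).indicator measurableSet_Ioi
    have Fintν : Integrable F ν :=
      (integrable_const (1:ℝ)).indicator measurableSet_Ioi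
    have tμ : Tendsto (fun n => ∫ x, f n x ∂μ) atTop (nhds (∫ x, F x ∂μ)) :=
      integral_tendsto_of_tendsto_of_monotone (fint μ hμ) Fintμ
        (Filter.Eventually.of_forall fmono) (Filter.Eventually.of_forall ftend)
    have tν : Tendsto (fun n => ∫ x, f n x ∂ν) atTop (nhds (∫ x, F x ∂ν)) :=
      integral_tendsto_of_tendsto_of_monotone (fint ν hν) Fintν
        (Filter.Eventually.of_forall fmono) (Filter.Eventually.of_forall ftend)
    have : ∫ x, F x ∂μ = ∫ x, F x ∂ν := by
      apply tendsto_nhds_unique tμ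
      exact tν.congr fun n => (feq n).symm
    have eμ : ∫ x, F x ∂μ = (μ (Set.Ioi a)).toReal := by
      rw [hF, MeasureTheory.integral_indicator_const (1:ℝ) measurableSet_Ioi]; simp; rfl
    have eν : ∫ x, F x ∂ν = (ν (Set.Ioi a)).toReal := by
      rw [hF, MeasureTheory.integral_indicator_const (1:ℝ) measurableSet_Ioi]; simp; rfl
    rw [eμ, eν] at this
    exact (ENNReal.toReal_eq_toReal_iff' (measure_lt_top μ _).ne (measure_lt_top ν _).ne).mp this
  -- conclude via Iic
  apply Measure.ext_of_Iic
  intro a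
  have hμc : μ (Set.Iic a) = μ Set.univ - μ (Set.Ioi a) := by
    rw [show Set.Iic a = (Set.Ioi a)ᶜ by simp]
    exact measure_compl measurableSet_Ioi (measure_lt_top μ _).ne
  have hνc : ν (Set.Iic a) = ν Set.univ - ν (Set.Ioi a) := by
    rw [show Set.Iic a = (Set.Ioi a)ᶜ by simp]
    exact measure_compl measurableSet_Ioi (measure_lt_top ν _).ne
  rw [hμc, hνc, mass, ioi a]


end
end

section
/- Let μ, ν ∈ M have the same total mass. Then W(μ,ν) = W(μ, Down(μ,ν)) + W(Down(μ,ν), ν) and W(μ,ν) = W(μ, Top(μ,ν)) + W(Top(μ,ν), ν). -/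
open MeasureTheory Set Filter ProbabilityTheory
open scoped Topology ENNReal NNReal

noncomputable section

namespace WTDaux

/-- CDF of a finite measure. -/
def F (μ : Measure ℝ) (x : ℝ) : ℝ := (μ (Set.Iic x)).toReal

variable (μ : Measure ℝ) [IsFiniteMeasure μ]

lemma F_mono : Monotone (F μ) := fun x y hxy =>
  ENNReal.toReal_mono (measure_ne_top μ _) (measure_mono (Iic_subset_Iic.2 hxy))

lemma F_nonneg (x : ℝ) : 0 ≤ F μ x := ENNReal.toReal_nonneg

lemma F_le_mass (x : ℝ) : F μ x ≤ (μ univ).toReal :=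
  ENNReal.toReal_mono (measure_ne_top μ _) (measure_mono (subset_univ _))

lemma F_meas : Measurable (F μ) := (F_mono μ).measurable

lemma F_tendsto_atTop : Tendsto (F μ) atTop (𝓝 (μ univ).toReal) :=
  (ENNReal.tendsto_toReal (measure_ne_top μ _)).comp (tendsto_measure_Iic_atTop μ)

lemma F_tendsto_atBot : Tendsto (F μ) atBot (𝓝 0) := by
  have h0 : (⋂ x : ℝ, Iic x) = (∅ : Set ℝ) := by
    ext y
    simp only [mem_iInter, mem_Iic, mem_empty_iff_false, iff_false, not_forall, not_le]
    exact ⟨y - 1, by linarith⟩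
  have := tendsto_measure_iInter_atBot (μ := μ) (s := fun x : ℝ => Iic x)
    (fun x => (measurableSet_Iic).nullMeasurableSet) (fun x y hxy => Iic_subset_Iic.2 hxy)
    ⟨0, measure_ne_top μ _⟩
  rw [h0, measure_empty] at this
  have : Tendsto (fun x : ℝ => F μ x) atBot (𝓝 ((0 : ℝ≥0∞)).toReal) :=
    (ENNReal.tendsto_toReal (by simp)).comp this
  simpa using this

lemma exists_F_lt {t : ℝ} (ht : 0 < t) : ∃ x, F μ x < t := by
  have := (F_tendsto_atBot μ).eventually_lt_const ht
  exact this.exists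

lemma bddBelow_S {t : ℝ} (ht : 0 < t) : BddBelow {x : ℝ | t ≤ F μ x} := by
  obtain ⟨x₀, hx₀⟩ := exists_F_lt μ ht
  refine ⟨x₀, fun y hy => ?_⟩
  by_contra hlt
  push_neg at hlt
  exact absurd (hy.trans (F_mono μ hlt.le)) (not_le.2 hx₀)

lemma nonempty_S {t : ℝ} (ht : t < (μ univ).toReal) : {x : ℝ | t ≤ F μ x}.Nonempty := by
  have := (F_tendsto_atTop μ).eventually_const_lt ht
  obtain ⟨x, hx⟩ := this.exists
  exact ⟨x, hx.le⟩

lemma le_F_of_gt {q t : ℝ} (h : ∀ y, q < y → t ≤ F μ y) : t ≤ F μ q := by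
  have hanti : Antitone (fun n : ℕ => Iic (q + 1 / (n + 1))) := by
    intro a b hab
    apply Iic_subset_Iic.2
    have : (1 : ℝ) / (b + 1) ≤ 1 / (a + 1) := by
      apply one_div_le_one_div_of_le (by positivity)
      exact_mod_cast by exact_mod_cast add_le_add_left (Nat.cast_le.2 hab) 1
    linarith
  have hInt : (⋂ n : ℕ, Iic (q + 1 / (n + 1))) = Iic q := by
    ext y
    simp only [mem_iInter, mem_Iic]
    constructor
    · intro hy
      by_contra hlt
      push_neg at hlt
      obtain ⟨n, hn⟩ := exists_nat_one_div_lt (sub_pos.2 hlt)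
      have := hy n
      push_cast at this hn ⊢
      linarith
    · intro hy n
      have : (0:ℝ) < 1 / (n + 1) := by positivity
      linarith
  have htend := tendsto_measure_iInter_atTop (μ := μ) (s := fun n : ℕ => Iic (q + 1 / (n + 1)))
    (fun n => measurableSet_Iic.nullMeasurableSet) hanti ⟨0, measure_ne_top μ _⟩
  rw [hInt] at htend
  have htendF : Tendsto (fun n : ℕ => F μ (q + 1 / (n + 1))) atTop (𝓝 (F μ q)) :=
    (ENNReal.tendsto_toReal (measure_ne_top μ _)).comp htend
  refine ge_of_tendsto htendF (Eventually.of_forall fun n => ?_)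
  refine h _ ?_
  have : (0:ℝ) < 1 / (n + 1) := by positivity
  linarith

lemma le_F_quantile {t : ℝ} (ht : 0 < t) (hne : {x : ℝ | t ≤ F μ x}.Nonempty) :
    t ≤ F μ (quantile μ t) := by
  apply le_F_of_gt μ
  intro y hy
  obtain ⟨s, hs, hsy⟩ := exists_lt_of_csInf_lt hne hy
  exact le_trans hs (F_mono μ hsy.le)

lemma quantile_le_iff {t x : ℝ} (ht : 0 < t) (hne : {x : ℝ | t ≤ F μ x}.Nonempty) :
    quantile μ t ≤ x ↔ t ≤ F μ x := by
  constructor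
  · intro h
    exact (le_F_quantile μ ht hne).trans (F_mono μ h)
  · intro h
    exact csInf_le (bddBelow_S μ ht) h


lemma quantile_nonpos {t : ℝ} (ht : t ≤ 0) : quantile μ t = 0 := by
  have : {x : ℝ | t ≤ F μ x} = univ := eq_univ_of_forall fun x => ht.trans (F_nonneg μ x)
  show sInf {x : ℝ | t ≤ F μ x} = 0
  rw [this, csInf_of_not_bddBelow, Real.sInf_empty]
  rintro ⟨b, hb⟩
  have := hb (mem_univ (b - 1))
  linarith

lemma quantile_gt_mass {t : ℝ} (ht : (μ univ).toReal < t) : quantile μ t = 0 := by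
  have : {x : ℝ | t ≤ F μ x} = ∅ := by
    ext x
    simp only [mem_setOf_eq, mem_empty_iff_false, iff_false, not_le]
    exact lt_of_le_of_lt (F_le_mass μ x) ht
  show sInf {x : ℝ | t ≤ F μ x} = 0
  rw [this, Real.sInf_empty]

lemma measurable_quantile : Measurable (quantile μ) := by
  set m := (μ univ).toReal with hm
  apply measurable_of_Iic
  intro x
  set P := quantile μ ⁻¹' Iic x with hP
  have hcover : P = (P ∩ Iic 0) ∪ ((P ∩ Ioo 0 m) ∪ ((P ∩ {m}) ∪ (P ∩ Ioi m))) := by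
    ext t
    constructor
    · intro ht
      rcases le_or_gt t 0 with h0 | h0
      · exact Or.inl ⟨ht, h0⟩
      rcases lt_trichotomy t m with h1 | h1 | h1
      · exact Or.inr (Or.inl ⟨ht, h0, h1⟩)
      · exact Or.inr (Or.inr (Or.inl ⟨ht, h1⟩))
      · exact Or.inr (Or.inr (Or.inr ⟨ht, h1⟩))
    · rintro (h | h | h | h) <;> exact h.1
  rw [hcover]
  have h1 : MeasurableSet (P ∩ Iic 0) := by
    have : P ∩ Iic 0 = {t : ℝ | (0:ℝ) ≤ x} ∩ Iic 0 := by
      ext t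
      simp only [hP, mem_inter_iff, mem_preimage, mem_Iic, mem_setOf_eq]
      constructor
      · rintro ⟨ht, ht0⟩
        exact ⟨by rwa [quantile_nonpos μ ht0] at ht, ht0⟩
      · rintro ⟨hx, ht0⟩
        exact ⟨by rw [quantile_nonpos μ ht0]; exact hx, ht0⟩
    rw [this]
    rcases le_or_gt 0 x with h | h
    · simp only [h, setOf_true, univ_inter]; exact measurableSet_Iic
    · simp only [not_le.2 h, setOf_false, empty_inter]
      simp [not_le.2 h]
  have h2 : MeasurableSet (P ∩ Ioo 0 m) := by
    have : P ∩ Ioo 0 m = Iic (F μ x) ∩ Ioo 0 m := by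
      ext t
      simp only [hP, mem_inter_iff, mem_preimage, mem_Iic, mem_Ioo]
      constructor
      · rintro ⟨ht, h0, h1⟩
        exact ⟨(quantile_le_iff μ h0 (nonempty_S μ h1)).1 ht, h0, h1⟩
      · rintro ⟨ht, h0, h1⟩
        exact ⟨(quantile_le_iff μ h0 (nonempty_S μ h1)).2 ht, h0, h1⟩
    rw [this]
    exact measurableSet_Iic.inter measurableSet_Ioo
  have h3 : MeasurableSet (P ∩ {m}) :=
    (Set.Countable.mono inter_subset_right (countable_singleton m)).measurableSet
  have h4 : MeasurableSet (P ∩ Ioi m) := by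
    have : P ∩ Ioi m = {t : ℝ | (0:ℝ) ≤ x} ∩ Ioi m := by
      ext t
      simp only [hP, mem_inter_iff, mem_preimage, mem_Iic, mem_Ioi, mem_setOf_eq]
      constructor
      · rintro ⟨ht, htm⟩
        exact ⟨by rwa [quantile_gt_mass μ htm] at ht, htm⟩
      · rintro ⟨hx, htm⟩
        exact ⟨by rw [quantile_gt_mass μ htm]; exact hx, htm⟩
    rw [this]
    rcases le_or_gt 0 x with h | h
    · simp only [h, setOf_true, univ_inter]; exact measurableSet_Ioi
    · simp only [not_le.2 h, setOf_false, empty_inter]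
      simp [not_le.2 h]
  exact h1.union (h2.union (h3.union h4))

lemma map_quantile :
    Measure.map (quantile μ) (volume.restrict (Ioc 0 (μ univ).toReal)) = μ := by
  set m := (μ univ).toReal with hm
  haveI : IsFiniteMeasure (volume.restrict (Ioc (0:ℝ) m)) :=
    ⟨by rw [Measure.restrict_apply_univ]; exact measure_Ioc_lt_top⟩
  haveI : IsFiniteMeasure (Measure.map (quantile μ) (volume.restrict (Ioc (0:ℝ) m))) :=
    Measure.isFiniteMeasure_map _ _
  refine Measure.ext_of_Iic _ _ (fun x => ?_)
  rw [Measure.map_apply (measurable_quantile μ) measurableSet_Iic,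
    Measure.restrict_apply (measurable_quantile μ measurableSet_Iic)]
  set P := quantile μ ⁻¹' Iic x with hP
  set a := F μ x with ha
  have ham : a ≤ m := F_le_mass μ x
  have ha0 : 0 ≤ a := F_nonneg μ x
  have hPIoo : P ∩ Ioo 0 m = Iic a ∩ Ioo 0 m := by
    ext t
    simp only [hP, mem_inter_iff, mem_preimage, mem_Iic, mem_Ioo]
    constructor
    · rintro ⟨ht, h0, h1⟩
      exact ⟨(quantile_le_iff μ h0 (nonempty_S μ h1)).1 ht, h0, h1⟩
    · rintro ⟨ht, h0, h1⟩
      exact ⟨(quantile_le_iff μ h0 (nonempty_S μ h1)).2 ht, h0, h1⟩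
  have key : volume (P ∩ Ioc 0 m) = ENNReal.ofReal a := by
    have hsub1 : P ∩ Ioc 0 m ⊆ (P ∩ Ioo 0 m) ∪ {m} := by
      rintro t ⟨htP, h0, h1⟩
      rcases lt_or_eq_of_le h1 with h | h
      · exact Or.inl ⟨htP, h0, h⟩
      · exact Or.inr h
    have hsub2 : P ∩ Ioo 0 m ⊆ P ∩ Ioc 0 m := fun t ⟨htP, h0, h1⟩ => ⟨htP, h0, h1.le⟩
    have hioo : volume (Iic a ∩ Ioo 0 m) = ENNReal.ofReal a := by
      rcases lt_or_eq_of_le ham with h | h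
      · have : Iic a ∩ Ioo 0 m = Ioc 0 a := by
          ext t
          simp only [mem_inter_iff, mem_Iic, mem_Ioo, mem_Ioc]
          constructor
          · rintro ⟨h1, h2, _⟩; exact ⟨h2, h1⟩
          · rintro ⟨h1, h2⟩; exact ⟨h2, h1, lt_of_le_of_lt h2 h⟩
        rw [this, Real.volume_Ioc, sub_zero]
      · have : Iic a ∩ Ioo 0 m = Ioo 0 m := by
          ext t
          simp only [mem_inter_iff, mem_Iic, mem_Ioo]
          exact ⟨fun ⟨_, h2⟩ => h2, fun h2 => ⟨h ▸ h2.2.le, h2⟩⟩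
        rw [this, Real.volume_Ioo, sub_zero, h]
    have hle : volume (P ∩ Ioc 0 m) ≤ ENNReal.ofReal a := by
      calc volume (P ∩ Ioc 0 m) ≤ volume ((P ∩ Ioo 0 m) ∪ {m}) := measure_mono hsub1
        _ ≤ volume (P ∩ Ioo 0 m) + volume {m} := measure_union_le _ _
        _ = ENNReal.ofReal a := by rw [hPIoo, hioo, Real.volume_singleton, add_zero]
    have hge : ENNReal.ofReal a ≤ volume (P ∩ Ioc 0 m) := by
      rw [← hioo, ← hPIoo]
      exact measure_mono hsub2
    exact le_antisymm hle hge
  rw [key, ha]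
  exact ENNReal.ofReal_toReal (measure_ne_top μ _)


lemma integrable_quantile (h : Integrable (fun x => x) μ) :
    Integrable (quantile μ) (volume.restrict (Ioc 0 (μ univ).toReal)) := by
  rw [← map_quantile μ] at h
  exact (integrable_map_measure aestronglyMeasurable_id
    (measurable_quantile μ).aemeasurable).mp h

/-- Key coupling estimate: the Kantorovich integrand against two pushforwards of a common
measure is controlled by the L¹ distance of the maps. -/
lemma west (R : Measure ℝ) [IsFiniteMeasure R] {α β : ℝ → ℝ} (hα : Measurable α)
    (hβ : Measurable β) (hiα : Integrable α R) (hiβ : Integrable β R) {f : ℝ → ℝ}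
    (hf : LipschitzWith 1 f) :
    |∫ x, f x ∂(Measure.map α R) - ∫ x, f x ∂(Measure.map β R)| ≤ ∫ t, |α t - β t| ∂ R := by
  have hfc : Continuous f := hf.continuous
  have hlip : ∀ a b : ℝ, |f a - f b| ≤ |a - b| := by
    intro a b
    have := hf.dist_le_mul a b
    simpa [Real.dist_eq] using this
  have hint : ∀ {γ : ℝ → ℝ}, Measurable γ → Integrable γ R → Integrable (fun t => f (γ t)) R := by
    intro γ hγ hiγ
    refine Integrable.mono' (hiγ.abs.add (integrable_const |f 0|))
      (hfc.measurable.comp hγ).aestronglyMeasurable (Eventually.of_forall fun t => ?_)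
    have h1 := hlip (γ t) 0
    have h2 : |f (γ t)| ≤ |f (γ t) - f 0| + |f 0| := by
      calc |f (γ t)| = |(f (γ t) - f 0) + f 0| := by ring_nf
        _ ≤ |f (γ t) - f 0| + |f 0| := abs_add_le _ _
    simp only [Real.norm_eq_abs, sub_zero, Pi.add_apply] at h1 h2 ⊢
    linarith
  have hfα := hint hα hiα
  have hfβ := hint hβ hiβ
  rw [integral_map hα.aemeasurable hfc.aestronglyMeasurable,
    integral_map hβ.aemeasurable hfc.aestronglyMeasurable, ← integral_sub hfα hfβ]
  calc |∫ t, (f (α t) - f (β t)) ∂ R| ≤ ∫ t, |f (α t) - f (β t)| ∂ R := by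
        simpa [Real.norm_eq_abs] using norm_integral_le_integral_norm (fun t => f (α t) - f (β t)) (μ := R)
    _ ≤ ∫ t, |α t - β t| ∂ R :=
        integral_mono (hfα.sub hfβ).abs (hiα.sub hiβ).abs (fun t => hlip (α t) (β t))


/-- The "signed tail" weight used in integration by parts. -/
def cW (ρ : Measure ℝ) (s : ℝ) : ℝ :=
  if 0 ≤ s then (ρ (Ioi s)).toReal else -((ρ (Iic s)).toReal)

lemma fub (ρ : Measure ℝ) [IsFiniteMeasure ρ] (hρ : Integrable (fun x => x) ρ)
    {g : ℝ → ℝ} (hg : Measurable g) (hgb : ∀ s, |g s| ≤ 1) :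
    Integrable (fun s => g s * cW ρ s) volume ∧
      ∫ x, (∫ s in (0:ℝ)..x, g s) ∂ρ = ∫ s, g s * cW ρ s := by
  set H : ℝ × ℝ → ℝ := fun p =>
    (if 0 ≤ p.2 ∧ p.2 < p.1 then g p.2 else 0) - (if p.1 ≤ p.2 ∧ p.2 < 0 then g p.2 else 0)
    with hH
  have hHmeas : Measurable H := by
    apply Measurable.sub
    · exact Measurable.ite
        ((measurableSet_le measurable_const measurable_snd).inter
          (measurableSet_lt measurable_snd measurable_fst))
        (hg.comp measurable_snd) measurable_const
    · exact Measurable.ite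
        ((measurableSet_le measurable_fst measurable_snd).inter
          (measurableSet_lt measurable_snd measurable_const))
        (hg.comp measurable_snd) measurable_const
  -- pointwise bound by the indicator of the "triangle"
  have hbd : ∀ x s : ℝ, ‖H (x, s)‖ ≤ (Ico 0 x ∪ Ico x 0).indicator (fun _ => (1:ℝ)) s := by
    intro x s
    by_cases h1 : 0 ≤ s ∧ s < x
    · have h2 : ¬(x ≤ s ∧ s < 0) := by rintro ⟨a, b⟩; linarith [h1.1]
      have hmem : s ∈ Ico 0 x ∪ Ico x 0 := Or.inl h1
      simp only [hH, h1, h2, if_true, if_false, sub_zero, Real.norm_eq_abs,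
        indicator_of_mem hmem]
      exact hgb s
    · by_cases h2 : x ≤ s ∧ s < 0
      · have hmem : s ∈ Ico 0 x ∪ Ico x 0 := Or.inr h2
        simp only [hH, h1, h2, if_true, if_false, zero_sub, Real.norm_eq_abs, abs_neg,
          indicator_of_mem hmem]
        exact hgb s
      · have hmem : s ∉ Ico 0 x ∪ Ico x 0 := by
          rintro (h | h)
          · exact h1 h
          · exact h2 h
        simp [hH, h1, h2, indicator_of_notMem hmem]
  have hvol : ∀ x : ℝ, (volume (Ico 0 x ∪ Ico x 0)).toReal = |x| := by
    intro x
    rcases le_or_gt 0 x with h | h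
    · rw [Ico_eq_empty (not_lt.2 h), union_empty, Real.volume_Ico, sub_zero,
        ENNReal.toReal_ofReal h, abs_of_nonneg h]
    · rw [Ico_eq_empty (not_lt.2 h.le), empty_union, Real.volume_Ico, zero_sub,
        ENNReal.toReal_ofReal (by linarith), abs_of_neg h]
  -- integrability of sections
  have hsec : ∀ x : ℝ, Integrable (fun s => H (x, s)) volume := by
    intro x
    refine Integrable.mono' ?_ (hHmeas.comp (measurable_prodMk_left)).aestronglyMeasurable
      (Eventually.of_forall fun s => hbd x s)
    exact (integrableOn_const ((measure_union_le _ _).trans_lt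
      (ENNReal.add_lt_top.2 ⟨measure_Ico_lt_top, measure_Ico_lt_top⟩)).ne).integrable_indicator
      (measurableSet_Ico.union measurableSet_Ico)
  -- integrability of H on the product
  have hHint : Integrable H (ρ.prod volume) := by
    refine (integrable_prod_iff hHmeas.aestronglyMeasurable).2
      ⟨Eventually.of_forall hsec, ?_⟩
    refine Integrable.mono' (hρ.abs) ?_ (Eventually.of_forall fun x => ?_)
    · exact (hHmeas.norm.stronglyMeasurable.integral_prod_right').aestronglyMeasurable
    · have h1 : ∫ s, ‖H (x, s)‖ ∂volume ≤
          ∫ s, (Ico 0 x ∪ Ico x 0).indicator (fun _ => (1:ℝ)) s ∂volume := by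
        refine integral_mono (hsec x).norm ?_ (hbd x)
        exact (integrableOn_const ((measure_union_le _ _).trans_lt
          (ENNReal.add_lt_top.2 ⟨measure_Ico_lt_top, measure_Ico_lt_top⟩)).ne).integrable_indicator
          (measurableSet_Ico.union measurableSet_Ico)
      have h2 : ∫ s, (Ico 0 x ∪ Ico x 0).indicator (fun _ => (1:ℝ)) s ∂volume = |x| := by
        rw [integral_indicator_const (1:ℝ) (measurableSet_Ico.union measurableSet_Ico),
          smul_eq_mul, mul_one, measureReal_def, hvol]
      have h3 : (0:ℝ) ≤ ∫ s, ‖H (x, s)‖ ∂volume :=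
        integral_nonneg fun s => norm_nonneg _
      rw [Real.norm_eq_abs, abs_of_nonneg h3]
      rw [h2] at h1
      exact h1
  -- inner integral in `s` equals the interval integral
  have hgi : ∀ a b : ℝ, IntervalIntegrable g volume a b := by
    intro a b
    rw [intervalIntegrable_iff]
    refine Integrable.mono' (g := fun _ => (1:ℝ))
      (integrableOn_const measure_Ioc_lt_top.ne)
      hg.aestronglyMeasurable.restrict (Eventually.of_forall fun s => ?_)
    simpa using hgb s
  have hfx : ∀ x : ℝ, ∫ s, H (x, s) ∂volume = ∫ s in (0:ℝ)..x, g s := by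
    intro x
    rcases le_or_gt 0 x with h | h
    · have he : (fun s => H (x, s)) = (Ico 0 x).indicator g := by
        funext s
        by_cases h1 : 0 ≤ s ∧ s < x
        · have h2 : ¬(x ≤ s ∧ s < 0) := by rintro ⟨a, b⟩; linarith [h1.1]
          simp [hH, h1, h2, indicator_of_mem, mem_Ico.2 h1]
        · have h2 : ¬(x ≤ s ∧ s < 0) := by rintro ⟨a, b⟩; linarith
          have : s ∉ Ico 0 x := fun hc => h1 (mem_Ico.1 hc)
          simp [hH, h1, h2, indicator_of_notMem this]
      rw [he, integral_indicator measurableSet_Ico, integral_Ico_eq_integral_Ioo,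
        ← integral_Ioc_eq_integral_Ioo, ← intervalIntegral.integral_of_le h]
    · have he : (fun s => H (x, s)) = fun s => -((Ico x 0).indicator g s) := by
        funext s
        by_cases h2 : x ≤ s ∧ s < 0
        · have h1 : ¬(0 ≤ s ∧ s < x) := by rintro ⟨a, b⟩; linarith
          simp [hH, h1, h2, indicator_of_mem, mem_Ico.2 h2]
        · have h1 : ¬(0 ≤ s ∧ s < x) := by rintro ⟨a, b⟩; linarith
          have : s ∉ Ico x 0 := fun hc => h2 (mem_Ico.1 hc)
          simp [hH, h1, h2, indicator_of_notMem this]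
      rw [he, integral_neg, integral_indicator measurableSet_Ico,
        integral_Ico_eq_integral_Ioo, ← integral_Ioc_eq_integral_Ioo,
        ← intervalIntegral.integral_of_le h.le, ← intervalIntegral.integral_symm]
  -- inner integral in `x` equals `g s * cW ρ s`
  have hgs : ∀ s : ℝ, ∫ x, H (x, s) ∂ρ = g s * cW ρ s := by
    intro s
    rcases le_or_gt 0 s with h | h
    · have he : (fun x => H (x, s)) = (Ioi s).indicator (fun _ => g s) := by
        funext x
        by_cases h1 : s < x
        · have hc1 : 0 ≤ s ∧ s < x := ⟨h, h1⟩
          have hc2 : ¬(x ≤ s ∧ s < 0) := by rintro ⟨a, b⟩; linarith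
          simp [hH, hc1, hc2, indicator_of_mem, mem_Ioi.2 h1]
        · have hc1 : ¬(0 ≤ s ∧ s < x) := by rintro ⟨a, b⟩; exact h1 b
          have hc2 : ¬(x ≤ s ∧ s < 0) := by rintro ⟨a, b⟩; linarith
          have : x ∉ Ioi s := fun hc => h1 (mem_Ioi.1 hc)
          simp [hH, hc1, hc2, indicator_of_notMem this]
      rw [he, integral_indicator_const _ measurableSet_Ioi, measureReal_def, cW, if_pos h, smul_eq_mul,
        mul_comm]
    · have he : (fun x => H (x, s)) = fun x => -((Iic s).indicator (fun _ => g s) x) := by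
        funext x
        by_cases h1 : x ≤ s
        · have hc1 : ¬(0 ≤ s ∧ s < x) := by rintro ⟨a, b⟩; linarith
          have hc2 : x ≤ s ∧ s < 0 := ⟨h1, h⟩
          simp [hH, hc1, hc2, indicator_of_mem, mem_Iic.2 h1]
        · have hc1 : ¬(0 ≤ s ∧ s < x) := by rintro ⟨a, b⟩; linarith
          have hc2 : ¬(x ≤ s ∧ s < 0) := by rintro ⟨a, b⟩; exact h1 a
          have : x ∉ Iic s := fun hc => h1 (mem_Iic.1 hc)
          simp [hH, hc1, hc2, indicator_of_notMem this]
      rw [he, integral_neg, integral_indicator_const _ measurableSet_Iic, measureReal_def, cW, if_neg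
        (not_le.2 h), smul_eq_mul]
      ring
  constructor
  · exact (hHint.integral_prod_right).congr (Eventually.of_forall hgs)
  · have hswap := integral_integral_swap (f := fun x s => H (x, s)) (μ := ρ) (ν := volume) hHint
    calc ∫ x, (∫ s in (0:ℝ)..x, g s) ∂ρ = ∫ x, ∫ s, H (x, s) ∂volume ∂ρ :=
          integral_congr_ae (Eventually.of_forall fun x => (hfx x).symm)
      _ = ∫ s, ∫ x, H (x, s) ∂ρ ∂volume := hswap
      _ = ∫ s, g s * cW ρ s := integral_congr_ae (Eventually.of_forall fun s => hgs s)

lemma dual_repr (μ ν : Measure ℝ) [IsFiniteMeasure μ] [IsFiniteMeasure ν]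
    (hμ : Integrable (fun x => x) μ) (hν : Integrable (fun x => x) ν)
    (hmass : μ univ = ν univ) :
    ∃ f : ℝ → ℝ, LipschitzWith 1 f ∧
      (∫ x, f x ∂μ) - (∫ x, f x ∂ν) = ∫ s, |F ν s - F μ s| := by
  classical
  set g : ℝ → ℝ := fun s => if F μ s < F ν s then 1 else if F ν s < F μ s then -1 else 0
    with hgdef
  have hg : Measurable g := by
    exact Measurable.ite (measurableSet_lt (F_meas μ) (F_meas ν)) measurable_const
      (Measurable.ite (measurableSet_lt (F_meas ν) (F_meas μ)) measurable_const
        measurable_const)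
  have hgb : ∀ s, |g s| ≤ 1 := by
    intro s
    simp only [hgdef]
    split_ifs <;> norm_num
  set f : ℝ → ℝ := fun x => ∫ s in (0:ℝ)..x, g s with hfdef
  have hgi : ∀ a b : ℝ, IntervalIntegrable g volume a b := by
    intro a b
    rw [intervalIntegrable_iff]
    refine Integrable.mono' (g := fun _ => (1:ℝ))
      (integrableOn_const measure_Ioc_lt_top.ne)
      hg.aestronglyMeasurable.restrict (Eventually.of_forall fun s => ?_)
    simpa using hgb s
  have hlipf : LipschitzWith 1 f := by
    refine LipschitzWith.of_dist_le_mul fun x y => ?_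
    have hxy : f x - f y = ∫ s in y..x, g s := by
      have h2 := intervalIntegral.integral_add_adjacent_intervals (hgi 0 y) (hgi y x)
      simp only [hfdef]
      linarith [h2]
    rw [Real.dist_eq, Real.dist_eq, hxy, NNReal.coe_one]
    have hb := intervalIntegral.norm_integral_le_of_norm_le_const (C := 1)
      (f := g) (a := y) (b := x) (fun s _ => by simpa using hgb s)
    simpa [Real.norm_eq_abs] using hb
  obtain ⟨hintμ, heqμ⟩ := fub μ hμ hg hgb
  obtain ⟨hintν, heqν⟩ := fub ν hν hg hgb
  refine ⟨f, hlipf, ?_⟩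
  have key : ∀ s, g s * cW μ s - g s * cW ν s = |F ν s - F μ s| := by
    intro s
    have hc : cW μ s - cW ν s = F ν s - F μ s := by
      rw [cW, cW]
      split_ifs with h
      · have hμ' : (μ (Ioi s)).toReal = (μ univ).toReal - F μ s := by
          rw [← compl_Iic, measure_compl measurableSet_Iic (measure_ne_top μ _),
            ENNReal.toReal_sub_of_le (measure_mono (subset_univ _)) (measure_ne_top μ _)]
          rfl
        have hν' : (ν (Ioi s)).toReal = (ν univ).toReal - F ν s := by
          rw [← compl_Iic, measure_compl measurableSet_Iic (measure_ne_top ν _),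
            ENNReal.toReal_sub_of_le (measure_mono (subset_univ _)) (measure_ne_top ν _)]
          rfl
        rw [hμ', hν', hmass]
        ring
      · show -(F μ s) - -(F ν s) = F ν s - F μ s
        ring
    rw [← mul_sub, hc]
    simp only [hgdef]
    rcases lt_trichotomy (F μ s) (F ν s) with h | h | h
    · rw [if_pos h, one_mul, abs_of_pos (by linarith)]
    · rw [if_neg (by simp [h]), if_neg (by simp [h]), zero_mul, h, sub_self, abs_zero]
    · rw [if_neg (not_lt.2 h.le), if_pos h, abs_of_neg (by linarith)]
      ring
  rw [heqμ, heqν, ← integral_sub hintμ hintν]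
  exact integral_congr_ae (Eventually.of_forall key)

lemma area (μ ν : Measure ℝ) [IsFiniteMeasure μ] [IsFiniteMeasure ν]
    (hmass : μ univ = ν univ) :
    (∫ s, |F ν s - F μ s|)
      = ∫ t in Ioc (0:ℝ) (μ univ).toReal, |quantile μ t - quantile ν t| := by
  set m := (μ univ).toReal with hm
  have hmν : (ν univ).toReal = m := by rw [hm, hmass]
  set E : Set (ℝ × ℝ) :=
    {p | min (F μ p.1) (F ν p.1) < p.2 ∧ p.2 ≤ max (F μ p.1) (F ν p.1)} with hE
  have hEmeas : MeasurableSet E :=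
    (measurableSet_lt (((F_meas μ).comp measurable_fst).min
        ((F_meas ν).comp measurable_fst)) measurable_snd).inter
      (measurableSet_le measurable_snd (((F_meas μ).comp measurable_fst).max
        ((F_meas ν).comp measurable_fst)))
  have hA : (volume.prod volume) E = ∫⁻ s, ENNReal.ofReal |F ν s - F μ s| := by
    rw [Measure.prod_apply hEmeas]
    apply lintegral_congr
    intro s
    have hpre : Prod.mk s ⁻¹' E = Ioc (min (F μ s) (F ν s)) (max (F μ s) (F ν s)) := rfl
    rw [hpre, Real.volume_Ioc, max_sub_min_eq_abs, abs_sub_comm]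
  have hB : (volume.prod volume) E = ∫⁻ t, volume {s | (s, t) ∈ E} := by
    rw [Measure.prod_apply_symm hEmeas]
    rfl
  have hout : ∀ t : ℝ, t ∉ Ioc (0:ℝ) m → volume {s | (s, t) ∈ E} = 0 := by
    intro t ht
    convert measure_empty (μ := (volume : Measure ℝ))
    ext s
    simp only [hE, mem_setOf_eq, mem_empty_iff_false, iff_false, not_and, not_le]
    intro h1
    rw [mem_Ioc, not_and_or] at ht
    rcases ht with ht | ht
    · push_neg at ht
      exfalso
      have : (0:ℝ) ≤ min (F μ s) (F ν s) := le_min (F_nonneg μ s) (F_nonneg ν s)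
      linarith
    · push_neg at ht
      refine lt_of_le_of_lt ?_ ht
      exact max_le (F_le_mass μ s) (hmν ▸ F_le_mass ν s)
  have hin : ∀ t ∈ Ioo (0:ℝ) m,
      volume {s | (s, t) ∈ E} = ENNReal.ofReal |quantile μ t - quantile ν t| := by
    intro t ht
    have hneμ := nonempty_S μ (show t < (μ univ).toReal from ht.2)
    have hneν := nonempty_S ν (show t < (ν univ).toReal from hmν ▸ ht.2)
    have hqμ : ∀ s : ℝ, quantile μ t ≤ s ↔ t ≤ F μ s :=
      fun s => quantile_le_iff μ ht.1 hneμ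
    have hqν : ∀ s : ℝ, quantile ν t ≤ s ↔ t ≤ F ν s :=
      fun s => quantile_le_iff ν ht.1 hneν
    have hset : {s : ℝ | (s, t) ∈ E}
        = Ico (quantile ν t) (quantile μ t) ∪ Ico (quantile μ t) (quantile ν t) := by
      ext s
      simp only [hE, mem_setOf_eq, mem_union, mem_Ico]
      constructor
      · rintro ⟨h1, h2⟩
        rw [min_lt_iff] at h1
        rw [le_max_iff] at h2
        rcases h2 with h2 | h2
        · rcases h1 with h1 | h1
          · exact absurd h2 (not_le.2 h1)
          · exact Or.inr ⟨(hqμ s).2 h2,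
              not_le.1 fun hc => absurd ((hqν s).1 hc) (not_le.2 h1)⟩
        · rcases h1 with h1 | h1
          · exact Or.inl ⟨(hqν s).2 h2,
              not_le.1 fun hc => absurd ((hqμ s).1 hc) (not_le.2 h1)⟩
          · exact absurd h2 (not_le.2 h1)
      · rintro (⟨hsl, hsr⟩ | ⟨hsl, hsr⟩)
        · have h2 : t ≤ F ν s := (hqν s).1 hsl
          have h1 : F μ s < t := not_le.1 fun hc => absurd ((hqμ s).2 hc) (not_le.2 hsr)
          exact ⟨min_lt_iff.2 (Or.inl h1), le_max_iff.2 (Or.inr h2)⟩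
        · have h2 : t ≤ F μ s := (hqμ s).1 hsl
          have h1 : F ν s < t := not_le.1 fun hc => absurd ((hqν s).2 hc) (not_le.2 hsr)
          exact ⟨min_lt_iff.2 (Or.inr h1), le_max_iff.2 (Or.inl h2)⟩
    rw [hset]
    rcases le_total (quantile μ t) (quantile ν t) with h | h
    · rw [Ico_eq_empty (not_lt.2 h), empty_union, Real.volume_Ico,
        abs_of_nonpos (sub_nonpos.2 h), neg_sub]
    · rw [Ico_eq_empty (not_lt.2 h), union_empty, Real.volume_Ico,
        abs_of_nonneg (sub_nonneg.2 h)]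
  have hres : ∫⁻ t, volume {s | (s, t) ∈ E}
      = ∫⁻ t in Ioc (0:ℝ) m, volume {s | (s, t) ∈ E} := by
    rw [← lintegral_indicator measurableSet_Ioc]
    apply lintegral_congr
    intro t
    by_cases h : t ∈ Ioc (0:ℝ) m
    · rw [indicator_of_mem h]
    · rw [indicator_of_notMem h, hout t h]
  have hfin : ∫⁻ t in Ioc (0:ℝ) m, volume {s | (s, t) ∈ E}
      = ∫⁻ t in Ioc (0:ℝ) m, ENNReal.ofReal |quantile μ t - quantile ν t| := by
    rw [Measure.restrict_congr_set Ioo_ae_eq_Ioc.symm]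
    exact setLIntegral_congr_fun measurableSet_Ioo
      (fun t ht => hin t ht)
  have hlin : (∫⁻ s, ENNReal.ofReal |F ν s - F μ s|)
      = ∫⁻ t in Ioc (0:ℝ) m, ENNReal.ofReal |quantile μ t - quantile ν t| := by
    rw [← hA, hB, hres, hfin]
  rw [integral_eq_lintegral_of_nonneg_ae (f := fun s => |F ν s - F μ s|)
      (Eventually.of_forall fun s => abs_nonneg _)
      (((F_meas ν).sub (F_meas μ)).abs.aestronglyMeasurable),
    integral_eq_lintegral_of_nonneg_ae (f := fun t => |quantile μ t - quantile ν t|)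
      (Eventually.of_forall fun t => abs_nonneg _)
      (((measurable_quantile μ).sub (measurable_quantile ν)).abs.aestronglyMeasurable),
    hlin]

lemma abs_min_add (a b : ℝ) : |a - min a b| + |min a b - b| = |a - b| := by
  rcases le_total a b with h | h
  · rw [min_eq_left h, sub_self, abs_zero, zero_add]
  · rw [min_eq_right h, sub_self, abs_zero, add_zero]

lemma abs_max_add (a b : ℝ) : |a - max a b| + |max a b - b| = |a - b| := by
  rcases le_total a b with h | h
  · rw [max_eq_right h, sub_self, abs_zero, add_zero]
  · rw [max_eq_left h, sub_self, abs_zero, zero_add]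

end WTDaux

/-- `Down(μ,ν)` and `Top(μ,ν)` lie metrically between `μ` and `ν`. -/
theorem W_top_down (μ ν : Measure ℝ) (hμ : MemM μ) (hν : MemM ν)
    (hmass : μ Set.univ = ν Set.univ) :
    (W μ ν = W μ (DownMeas μ ν) + W (DownMeas μ ν) ν) ∧
    (W μ ν = W μ (TopMeas μ ν) + W (TopMeas μ ν) ν) := by
  classical
  haveI hμf : IsFiniteMeasure μ := hμ.1
  haveI hνf : IsFiniteMeasure ν := hν.1
  set m : ℝ := (μ Set.univ).toReal with hm
  set R : Measure ℝ := volume.restrict (Set.Ioc (0:ℝ) m) with hRdef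
  haveI : IsFiniteMeasure R :=
    ⟨by rw [hRdef, Measure.restrict_apply_univ]; exact measure_Ioc_lt_top⟩
  have hGμ : Measurable (quantile μ) := WTDaux.measurable_quantile μ
  have hGν : Measurable (quantile ν) := WTDaux.measurable_quantile ν
  have hGmin : Measurable (fun t => min (quantile μ t) (quantile ν t)) := hGμ.min hGν
  have hGmax : Measurable (fun t => max (quantile μ t) (quantile ν t)) := hGμ.max hGν
  have hmapμ : Measure.map (quantile μ) R = μ := WTDaux.map_quantile μ
  have hmapν : Measure.map (quantile ν) R = ν := by
    have h := WTDaux.map_quantile ν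
    rw [← hmass] at h
    exact h
  have hiμ : Integrable (quantile μ) R := WTDaux.integrable_quantile μ hμ.2
  have hiν : Integrable (quantile ν) R := by
    have h := WTDaux.integrable_quantile ν hν.2
    rw [← hmass] at h
    exact h
  have himin : Integrable (fun t => min (quantile μ t) (quantile ν t)) R := hiμ.inf hiν
  have himax : Integrable (fun t => max (quantile μ t) (quantile ν t)) R := hiμ.sup hiν
  set D : ℝ := ∫ t, |quantile μ t - quantile ν t| ∂ R with hDdef
  have hD0 : 0 ≤ D := integral_nonneg fun t => abs_nonneg _
  -- upper bound for W μ ν elements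
  have hub : ∀ d ∈ {d : ℝ | ∃ f : ℝ → ℝ, LipschitzWith 1 f ∧
      d = |∫ x, f x ∂μ - ∫ x, f x ∂ν|}, d ≤ D := by
    rintro d ⟨f, hf, rfl⟩
    have h := WTDaux.west R hGμ hGν hiμ hiν hf
    rw [hmapμ, hmapν] at h
    exact h
  -- D is attained
  have hmem : D ∈ {d : ℝ | ∃ f : ℝ → ℝ, LipschitzWith 1 f ∧
      d = |∫ x, f x ∂μ - ∫ x, f x ∂ν|} := by
    obtain ⟨f₀, hf₀, heq₀⟩ := WTDaux.dual_repr μ ν hμ.2 hν.2 hmass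
    have harea := WTDaux.area μ ν hmass
    refine ⟨f₀, hf₀, ?_⟩
    rw [heq₀, harea]
    exact (abs_of_nonneg hD0).symm
  have hWμν : W μ ν = D := by
    rw [W]
    exact IsGreatest.csSup_eq ⟨hmem, hub⟩
  -- zero is always a member, hence W ≥ 0 once bounded above
  have hzero : ∀ ρ₁ ρ₂ : Measure ℝ, (0:ℝ) ∈ {d : ℝ | ∃ f : ℝ → ℝ, LipschitzWith 1 f ∧
      d = |∫ x, f x ∂ρ₁ - ∫ x, f x ∂ρ₂|} := by
    intro ρ₁ ρ₂
    exact ⟨fun _ => 0, (LipschitzWith.const (b := (0:ℝ))).weaken zero_le_one, by simp⟩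
  -- generic treatment of an intermediate measure given by a map
  have main : ∀ γ : ℝ → ℝ, Measurable γ → Integrable γ R →
      (∀ t, |quantile μ t - γ t| + |γ t - quantile ν t| = |quantile μ t - quantile ν t|) →
      W μ ν = W μ (Measure.map γ R) + W (Measure.map γ R) ν := by
    intro γ hγ hiγ hptw
    set η := Measure.map γ R with hη
    set A : ℝ := ∫ t, |quantile μ t - γ t| ∂ R with hA
    set B : ℝ := ∫ t, |γ t - quantile ν t| ∂ R with hB
    have hA0 : 0 ≤ A := integral_nonneg fun t => abs_nonneg _
    have hB0 : 0 ≤ B := integral_nonneg fun t => abs_nonneg _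
    have hAB : A + B = D := by
      have h1 : Integrable (fun t => |quantile μ t - γ t|) R := (hiμ.sub hiγ).abs
      have h2 : Integrable (fun t => |γ t - quantile ν t|) R := (hiγ.sub hiν).abs
      rw [hA, hB, hDdef, ← integral_add h1 h2]
      exact integral_congr_ae (Eventually.of_forall fun t => hptw t)
    have hubA : ∀ d ∈ {d : ℝ | ∃ f : ℝ → ℝ, LipschitzWith 1 f ∧
        d = |∫ x, f x ∂μ - ∫ x, f x ∂η|}, d ≤ A := by
      rintro d ⟨f, hf, rfl⟩
      have h := WTDaux.west R hGμ hγ hiμ hiγ hf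
      rw [hmapμ] at h
      exact h
    have hubB : ∀ d ∈ {d : ℝ | ∃ f : ℝ → ℝ, LipschitzWith 1 f ∧
        d = |∫ x, f x ∂η - ∫ x, f x ∂ν|}, d ≤ B := by
      rintro d ⟨f, hf, rfl⟩
      have h := WTDaux.west R hγ hGν hiγ hiν hf
      rw [hmapν] at h
      exact h
    have hbddA : BddAbove {d : ℝ | ∃ f : ℝ → ℝ, LipschitzWith 1 f ∧
        d = |∫ x, f x ∂μ - ∫ x, f x ∂η|} := ⟨A, fun d hd => hubA d hd⟩
    have hbddB : BddAbove {d : ℝ | ∃ f : ℝ → ℝ, LipschitzWith 1 f ∧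
        d = |∫ x, f x ∂η - ∫ x, f x ∂ν|} := ⟨B, fun d hd => hubB d hd⟩
    have hWA : W μ η ≤ A := by
      rw [W]; exact Real.sSup_le hubA hA0
    have hWB : W η ν ≤ B := by
      rw [W]; exact Real.sSup_le hubB hB0
    have hWA0 : 0 ≤ W μ η := by
      rw [W]; exact le_csSup hbddA (hzero μ η)
    have hWB0 : 0 ≤ W η ν := by
      rw [W]; exact le_csSup hbddB (hzero η ν)
    have htri : W μ ν ≤ W μ η + W η ν := by
      rw [W]
      refine Real.sSup_le ?_ (by linarith)
      rintro d ⟨f, hf, rfl⟩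
      have h1 : |∫ x, f x ∂μ - ∫ x, f x ∂η| ≤ W μ η := by
        rw [W]; exact le_csSup hbddA ⟨f, hf, rfl⟩
      have h2 : |∫ x, f x ∂η - ∫ x, f x ∂ν| ≤ W η ν := by
        rw [W]; exact le_csSup hbddB ⟨f, hf, rfl⟩
      calc |∫ x, f x ∂μ - ∫ x, f x ∂ν|
          ≤ |∫ x, f x ∂μ - ∫ x, f x ∂η| + |∫ x, f x ∂η - ∫ x, f x ∂ν| :=
            abs_sub_le _ _ _
        _ ≤ W μ η + W η ν := add_le_add h1 h2
    have hge : W μ η + W η ν ≤ W μ ν := by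
      rw [hWμν, ← hAB]
      exact add_le_add hWA hWB
    exact le_antisymm htri hge
  constructor
  · have h := main (fun t => min (quantile μ t) (quantile ν t)) hGmin himin
      (fun t => WTDaux.abs_min_add _ _)
    exact h
  · have h := main (fun t => max (quantile μ t) (quantile ν t)) hGmax himax
      (fun t => WTDaux.abs_max_add _ _)
    exact h

end
end

section
/- Let μ, ν ∈ M. (i) If μ ≤_{C,+,sto} ν, then for every a ∈ ℝ there exists ν′ ∈ M concentrated on (−∞,a] (i.e. ν′((a,∞)) = 0) such that μ ≤_{C,+} ν + ν′. (ii) For every μ ∈ M and all a < b in ℝ there exists ν′ ∈ M with ν′((a,b)) = 0 and μ ≤_{C,+} ν′. -/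
open MeasureTheory Set Filter ProbabilityTheory

noncomputable section

lemma convex_continuous {φ : ℝ → ℝ} (h : ConvexOn ℝ Set.univ φ) : Continuous φ := by
  rw [← continuousOn_univ]
  exact h.continuousOn isOpen_univ

lemma memM_integrable {μ : Measure ℝ} (hμ : MemM μ) {φ : ℝ → ℝ} (hg : LinGrowth φ)
    (hc : Continuous φ) : Integrable φ μ := by
  obtain ⟨C, hC⟩ := hg
  haveI := hμ.1
  have h1 : Integrable (fun x : ℝ => |C| * (1 + |x|)) μ :=
    ((integrable_const (1:ℝ)).add hμ.2.abs).const_mul _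
  refine h1.mono' hc.aestronglyMeasurable (Filter.Eventually.of_forall fun x => ?_)
  rw [Real.norm_eq_abs]
  calc |φ x| ≤ C * (1 + |x|) := hC x
    _ ≤ |C| * (1 + |x|) := mul_le_mul_of_nonneg_right (le_abs_self C) (by positivity)

lemma linGrowth_comp {φ g : ℝ → ℝ} (h : LinGrowth φ) (D : ℝ) (hg : ∀ x, |g x| ≤ |x| + D) :
    LinGrowth (fun x => φ (g x)) := by
  obtain ⟨C, hC⟩ := h
  refine ⟨|C| * (1 + |D|), fun x => ?_⟩
  have h1 := hC (g x)
  have h2 := hg x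
  have h3 := abs_nonneg x
  have h4 := le_abs_self D
  have h5 := abs_nonneg (g x)
  have h6 := le_abs_self C
  have h7 := abs_nonneg C
  calc |φ (g x)| ≤ C * (1 + |g x|) := h1
    _ ≤ |C| * (1 + |g x|) := mul_le_mul_of_nonneg_right h6 (by positivity)
    _ ≤ |C| * (1 + (|x| + |D|)) := by
        have : |g x| ≤ |x| + |D| := h2.trans (by linarith)
        exact mul_le_mul_of_nonneg_left (by linarith) h7
    _ ≤ |C| * (1 + |D|) * (1 + |x|) := by nlinarith [mul_nonneg (mul_nonneg h7 (abs_nonneg D)) h3]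

lemma abs_min_le (x a : ℝ) : |min x a| ≤ |x| + |a| := by
  rcases min_cases x a with ⟨h, _⟩ | ⟨h, _⟩ <;> rw [h] <;>
    [exact le_add_of_le_of_nonneg le_rfl (abs_nonneg a);
     exact le_add_of_nonneg_of_le (abs_nonneg x) le_rfl]

lemma abs_max_le' (x a : ℝ) : |max x a| ≤ |x| + |a| := by
  rcases max_cases x a with ⟨h, _⟩ | ⟨h, _⟩ <;> rw [h] <;>
    [exact le_add_of_le_of_nonneg le_rfl (abs_nonneg a);
     exact le_add_of_nonneg_of_le (abs_nonneg x) le_rfl]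


lemma memM_map {μ : Measure ℝ} (hμ : MemM μ) {g : ℝ → ℝ} (hg : Continuous g) (D : ℝ)
    (hD : ∀ x, |g x| ≤ |x| + D) : MemM (Measure.map g μ) := by
  haveI := hμ.1
  haveI hfin : IsFiniteMeasure (Measure.map g μ) :=
    ⟨by rw [Measure.map_apply hg.measurable MeasurableSet.univ]; exact measure_lt_top μ _⟩
  refine ⟨hfin, ?_⟩
  have hlg : LinGrowth g := by
    refine ⟨1 + |D|, fun x => ?_⟩
    have h1 := hD x
    have h2 := le_abs_self D
    have h3 := abs_nonneg x
    have h4 := abs_nonneg D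
    nlinarith
  exact (integrable_map_measure aestronglyMeasurable_id hg.aemeasurable).mpr
    (by simpa [Function.comp] using memM_integrable hμ hlg hg)

/-- Key decomposition: if φ is convex, nonneg, lin-growth and not antitone, then there is
a monotone convex nonneg lin-growth ψ ≤ φ with φ x ≤ φ (min x a) + ψ x. -/
lemma key_decomp {φ : ℝ → ℝ} (hconv : ConvexOn ℝ Set.univ φ) (hpos : ∀ x, 0 ≤ φ x)
    (hlg : LinGrowth φ) (hna : ¬ Antitone φ) (a : ℝ) :
    ∃ ψ : ℝ → ℝ, LinGrowth ψ ∧ ConvexOn ℝ Set.univ ψ ∧ (∀ x, 0 ≤ ψ x) ∧ Monotone ψ ∧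
      (∀ x, ψ x ≤ φ x) ∧ (∀ x, φ x ≤ φ (min x a) + ψ x) := by
  have hcont := convex_continuous hconv
  -- witness of non-antitonicity
  rw [Antitone] at hna
  push_neg at hna
  obtain ⟨x0, y0, hx0y0, hphi⟩ := hna
  -- φ is eventually above φ y0
  have h_y : ∀ t, y0 ≤ t → φ y0 ≤ φ t := by
    intro t ht
    have h := hconv.le_max_of_mem_Icc (mem_univ x0) (mem_univ t) ⟨hx0y0, ht⟩
    rcases max_cases (φ x0) (φ t) with ⟨he, _⟩ | ⟨he, _⟩ <;> rw [he] at h <;> linarith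
  -- minimizer on uIcc a y0
  obtain ⟨c, hcmem, hcmin⟩ := isCompact_uIcc.exists_isMinOn (nonempty_uIcc)
    (hcont.continuousOn : ContinuousOn φ (uIcc a y0))
  have hcy0 : φ c ≤ φ y0 := hcmin (right_mem_uIcc)
  have hca : φ c ≤ φ a := hcmin (left_mem_uIcc)
  rw [uIcc] at hcmem
  have hc1 : ∀ t, c ≤ t → φ c ≤ φ t := by
    intro t ht
    rcases le_or_gt t (max a y0) with h | h
    · exact hcmin ⟨hcmem.1.trans ht, h⟩
    · exact hcy0.trans (h_y t ((le_max_right a y0).trans h.le))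
  have hmono : ∀ s t, c ≤ s → s ≤ t → φ s ≤ φ t := by
    intro s t hcs hst
    have h := hconv.le_max_of_mem_Icc (mem_univ c) (mem_univ t) ⟨hcs, hst⟩
    rwa [max_eq_right (hc1 t (hcs.trans hst))] at h
  refine ⟨fun x => φ (max x c) - φ c, ?_, ?_, ?_, ?_, ?_, ?_⟩
  · -- LinGrowth
    obtain ⟨C, hC⟩ := hlg
    refine ⟨|C| * (1 + |c|) + |φ c|, fun x => ?_⟩
    have h1 : |φ (max x c)| ≤ |C| * (1 + |c|) * (1 + |x|) := by
      have h2 : |max x c| ≤ |x| + |c| := by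
        rcases max_cases x c with ⟨h, _⟩ | ⟨h, _⟩ <;> rw [h]
        · exact le_add_of_le_of_nonneg le_rfl (abs_nonneg c)
        · exact le_add_of_nonneg_of_le (abs_nonneg x) le_rfl
      calc |φ (max x c)| ≤ C * (1 + |max x c|) := hC _
        _ ≤ |C| * (1 + |max x c|) := mul_le_mul_of_nonneg_right (le_abs_self C) (by positivity)
        _ ≤ |C| * (1 + (|x| + |c|)) := mul_le_mul_of_nonneg_left (by linarith) (abs_nonneg C)
        _ ≤ |C| * (1 + |c|) * (1 + |x|) := by
            nlinarith [mul_nonneg (mul_nonneg (abs_nonneg C) (abs_nonneg c)) (abs_nonneg x)]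
    calc |φ (max x c) - φ c| ≤ |φ (max x c)| + |φ c| := abs_sub _ _
      _ ≤ |C| * (1 + |c|) * (1 + |x|) + |φ c| * 1 := by
          refine add_le_add h1 ?_; nlinarith [abs_nonneg (φ c)]
      _ ≤ (|C| * (1 + |c|) + |φ c|) * (1 + |x|) := by
          nlinarith [abs_nonneg (φ c), abs_nonneg x]
  · -- ConvexOn
    refine ⟨convex_univ, ?_⟩
    intro x _ y _ p q hp hq hpq
    simp only [smul_eq_mul]
    have hle1 : max (p * x + q * y) c ≤ p * max x c + q * max y c := by
      apply max_le
      · exact add_le_add (mul_le_mul_of_nonneg_left (le_max_left x c) hp)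
          (mul_le_mul_of_nonneg_left (le_max_left y c) hq)
      · calc c = p * c + q * c := by rw [← add_mul, hpq, one_mul]
          _ ≤ p * max x c + q * max y c :=
            add_le_add (mul_le_mul_of_nonneg_left (le_max_right x c) hp)
              (mul_le_mul_of_nonneg_left (le_max_right y c) hq)
    have h2 : φ (max (p * x + q * y) c) ≤ φ (p * max x c + q * max y c) :=
      hmono _ _ (le_max_right _ _) hle1
    have h3 : φ (p * max x c + q * max y c) ≤ p * φ (max x c) + q * φ (max y c) := by
      have := hconv.2 (mem_univ (max x c)) (mem_univ (max y c)) hp hq hpq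
      simpa [smul_eq_mul] using this
    have hsum : p * φ c + q * φ c = φ c := by rw [← add_mul, hpq, one_mul]
    linarith
  · intro x
    show (0:ℝ) ≤ φ (max x c) - φ c
    have := hc1 (max x c) (le_max_right x c); linarith
  · intro x y hxy
    have := hmono (max x c) (max y c) (le_max_right x c) (max_le_max hxy le_rfl)
    simpa using this
  · -- ψ ≤ φ
    intro x
    show φ (max x c) - φ c ≤ φ x
    rcases le_total x c with h | h
    · rw [max_eq_right h]; have := hpos x; linarith
    · rw [max_eq_left h]; have := hpos c; linarith
  · -- key inequality
    intro x
    show φ x ≤ φ (min x a) + (φ (max x c) - φ c)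
    rcases le_total x a with h | h
    · rw [min_eq_left h]
      have := hc1 (max x c) (le_max_right x c); linarith
    · rw [min_eq_right h]
      rcases le_total x c with h2 | h2
      · rw [max_eq_right h2]
        have h3 := hconv.le_max_of_mem_Icc (mem_univ a) (mem_univ c) ⟨h, h2⟩
        rw [max_eq_left hca] at h3
        linarith
      · rw [max_eq_left h2]; linarith



/-- adding mass at `-∞` (resp. outside an interval) to pass from `≤_{C,+,sto}`
to `≤_{C,+}`. -/
theorem add_mass_at_infinity (μ ν : Measure ℝ) (hμ : MemM μ) (hν : MemM ν) :
    (leCPS μ ν → ∀ a : ℝ, ∃ ν' : Measure ℝ, MemM ν' ∧ ν' (Set.Ioi a) = 0 ∧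
      leCP μ (ν + ν')) ∧
    (∀ a b : ℝ, a < b → ∃ ν' : Measure ℝ, MemM ν' ∧ ν' (Set.Ioo a b) = 0 ∧ leCP μ ν') := by
  haveI := hμ.1
  haveI := hν.1
  constructor
  · -- Part (i)
    intro hsto a
    have hfc : Continuous (fun x : ℝ => min x a) := continuous_id.min continuous_const
    have habs : ∀ x : ℝ, |min x a| ≤ |x| + |a| := by
      intro x
      rcases min_cases x a with ⟨h, _⟩ | ⟨h, _⟩ <;> rw [h]
      · exact le_add_of_le_of_nonneg le_rfl (abs_nonneg a)
      · exact le_add_of_nonneg_of_le (abs_nonneg x) le_rfl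
    refine ⟨Measure.map (fun x : ℝ => min x a) μ, memM_map hμ hfc |a| habs, ?_, ?_⟩
    · rw [Measure.map_apply hfc.measurable measurableSet_Ioi]
      have hset : (fun x : ℝ => min x a) ⁻¹' (Set.Ioi a) = ∅ := by
        ext x
        simp [not_lt.mpr (min_le_right x a)]
      rw [hset]; exact measure_empty
    · intro φ hlg hconv hpos
      have hcont := convex_continuous hconv
      have hφμ : Integrable φ μ := memM_integrable hμ hlg hcont
      have hφν : Integrable φ ν := memM_integrable hν hlg hcont
      have hcomp_lg : LinGrowth (fun x => φ (min x a)) := linGrowth_comp hlg |a| habs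
      have hcompcont : Continuous (fun x => φ (min x a)) := hcont.comp hfc
      have hcompμ : Integrable (fun x => φ (min x a)) μ := memM_integrable hμ hcomp_lg hcompcont
      have hφν' : Integrable φ (Measure.map (fun x : ℝ => min x a) μ) := by
        rw [integrable_map_measure hcont.aestronglyMeasurable hfc.aemeasurable]
        simpa [Function.comp_def] using hcompμ
      have hmapeq : ∫ x, φ x ∂(Measure.map (fun x : ℝ => min x a) μ) = ∫ x, φ (min x a) ∂μ :=
        integral_map hfc.aemeasurable hcont.aestronglyMeasurable
      rw [integral_add_measure hφν hφν', hmapeq]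
      by_cases hmon : Monotone φ
      · have h1 := hsto φ hlg hconv hpos hmon
        have h2 : 0 ≤ ∫ x, φ (min x a) ∂μ := integral_nonneg fun x => hpos _
        linarith
      by_cases hant : Antitone φ
      · have h1 : ∫ x, φ x ∂μ ≤ ∫ x, φ (min x a) ∂μ :=
          integral_mono hφμ hcompμ fun x => hant (min_le_left x a)
        have h2 : 0 ≤ ∫ x, φ x ∂ν := integral_nonneg hpos
        linarith
      · obtain ⟨ψ, hψlg, hψconv, hψpos, hψmono, hψle, hkey⟩ := key_decomp hconv hpos hlg hant a
        have hψcont := convex_continuous hψconv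
        have hψμ := memM_integrable hμ hψlg hψcont
        have hψν := memM_integrable hν hψlg hψcont
        have h1 : ∫ x, φ x ∂μ ≤ ∫ x, (φ (min x a) + ψ x) ∂μ :=
          integral_mono hφμ (hcompμ.add hψμ) hkey
        rw [integral_add hcompμ hψμ] at h1
        have h2 := hsto ψ hψlg hψconv hψpos hψmono
        have h3 : ∫ x, ψ x ∂ν ≤ ∫ x, φ x ∂ν := integral_mono hψν hφν hψle
        linarith
  · -- Part (ii)
    intro a b hab
    have hf1 : Continuous (fun x : ℝ => min x a) := continuous_id.min continuous_const
    have hf2 : Continuous (fun x : ℝ => max x b) := continuous_id.max continuous_const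
    have habs1 : ∀ x : ℝ, |min x a| ≤ |x| + |a| := by
      intro x
      rcases min_cases x a with ⟨h, _⟩ | ⟨h, _⟩ <;> rw [h]
      · exact le_add_of_le_of_nonneg le_rfl (abs_nonneg a)
      · exact le_add_of_nonneg_of_le (abs_nonneg x) le_rfl
    have habs2 : ∀ x : ℝ, |max x b| ≤ |x| + |b| := by
      intro x
      rcases max_cases x b with ⟨h, _⟩ | ⟨h, _⟩ <;> rw [h]
      · exact le_add_of_le_of_nonneg le_rfl (abs_nonneg b)
      · exact le_add_of_nonneg_of_le (abs_nonneg x) le_rfl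
    have hm1 : MemM (Measure.map (fun x : ℝ => min x a) μ) := memM_map hμ hf1 |a| habs1
    have hm2 : MemM (Measure.map (fun x : ℝ => max x b) μ) := memM_map hμ hf2 |b| habs2
    haveI := hm1.1
    haveI := hm2.1
    refine ⟨Measure.map (fun x : ℝ => min x a) μ + Measure.map (fun x : ℝ => max x b) μ,
      ⟨inferInstance, hm1.2.add_measure hm2.2⟩, ?_, ?_⟩
    · rw [Measure.add_apply, Measure.map_apply hf1.measurable measurableSet_Ioo,
        Measure.map_apply hf2.measurable measurableSet_Ioo]
      have hs1 : (fun x : ℝ => min x a) ⁻¹' (Set.Ioo a b) = ∅ := by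
        ext x
        simp only [Set.mem_preimage, Set.mem_Ioo, Set.mem_empty_iff_false, iff_false, not_and]
        intro h
        exact absurd h (not_lt.mpr (min_le_right x a))
      have hs2 : (fun x : ℝ => max x b) ⁻¹' (Set.Ioo a b) = ∅ := by
        ext x
        simp only [Set.mem_preimage, Set.mem_Ioo, Set.mem_empty_iff_false, iff_false, not_and]
        intro _
        exact not_lt.mpr (le_max_right x b)
      rw [hs1, hs2]
      simp
    · intro φ hlg hconv hpos
      have hcont := convex_continuous hconv
      have hφμ : Integrable φ μ := memM_integrable hμ hlg hcont
      have hc1lg : LinGrowth (fun x => φ (min x a)) := linGrowth_comp hlg |a| habs1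
      have hc2lg : LinGrowth (fun x => φ (max x b)) := linGrowth_comp hlg |b| habs2
      have hc1μ : Integrable (fun x => φ (min x a)) μ :=
        memM_integrable hμ hc1lg (hcont.comp hf1)
      have hc2μ : Integrable (fun x => φ (max x b)) μ :=
        memM_integrable hμ hc2lg (hcont.comp hf2)
      have hφ1 : Integrable φ (Measure.map (fun x : ℝ => min x a) μ) := by
        rw [integrable_map_measure hcont.aestronglyMeasurable hf1.aemeasurable]
        simpa [Function.comp_def] using hc1μ
      have hφ2 : Integrable φ (Measure.map (fun x : ℝ => max x b) μ) := by
        rw [integrable_map_measure hcont.aestronglyMeasurable hf2.aemeasurable]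
        simpa [Function.comp_def] using hc2μ
      rw [integral_add_measure hφ1 hφ2,
        integral_map hf1.aemeasurable hcont.aestronglyMeasurable,
        integral_map hf2.aemeasurable hcont.aestronglyMeasurable]
      have hpt : ∀ x, φ x ≤ φ (min x a) + φ (max x b) := by
        intro x
        rcases le_total x a with h | h
        · rw [min_eq_left h]
          have := hpos (max x b)
          linarith
        · rw [min_eq_right h]
          rcases le_total x b with h2 | h2
          · rw [max_eq_right h2]
            have h3 := hconv.le_max_of_mem_Icc (Set.mem_univ a) (Set.mem_univ b) ⟨h, h2⟩
            have h4 := hpos a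
            have h5 := hpos b
            rcases max_cases (φ a) (φ b) with ⟨he, _⟩ | ⟨he, _⟩ <;> rw [he] at h3 <;> linarith
          · rw [max_eq_left h2]
            have := hpos a
            linarith
      calc ∫ x, φ x ∂μ ≤ ∫ x, (φ (min x a) + φ (max x b)) ∂μ :=
            integral_mono hφμ (hc1μ.add hc2μ) hpt
        _ = (∫ x, φ (min x a) ∂μ) + ∫ x, φ (max x b) ∂μ := integral_add hc1μ hc2μ
end
end

section
/- Let π be a martingale coupling of probability measures μ, ν ∈ M, let G ⊆ ℝ² be Borel with π(G) = 1, and let (x,y) ∈ spt(π) with x < y. Then for every ε > 0 there exist x₁, y₁⁻, y₁⁺ ∈ ℝ with (x₁, y₁⁻) ∈ G, (x₁, y₁⁺) ∈ G, y₁⁻ ≤ y₁⁺, max(|x₁ − x|, |y₁⁺ − y|) ≤ ε and y₁⁻ < x + ε. Symmetrically, if x > y, then for every ε > 0 there exist (x₁, y₁⁻), (x₁, y₁⁺) ∈ G with y₁⁻ ≤ y₁⁺, max(|x₁ − x|, |y₁⁻ − y|) ≤ ε and y₁⁺ > x − ε. -/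
open MeasureTheory Set Filter ProbabilityTheory
open scoped ENNReal NNReal BoundedContinuousFunction

noncomputable section

lemma aux_fiber_eq (π : Measure (ℝ × ℝ)) [IsProbabilityMeasure π]
    (hint : Integrable (fun p : ℝ × ℝ => p.2 - p.1) π)
    (hmart : ∀ f : ℝ → ℝ, Continuous f → (∃ C : ℝ, ∀ x, |f x| ≤ C) →
      ∫ p : ℝ × ℝ, f p.1 * (p.2 - p.1) ∂π = 0) :
    ∀ᵐ x ∂π.fst, ∫⁻ y, ENNReal.ofReal (y - x) ∂π.condKernel x
      = ∫⁻ y, ENNReal.ofReal (x - y) ∂π.condKernel x := by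
  have hp : Measurable fun p : ℝ × ℝ => ENNReal.ofReal (p.2 - p.1) :=
    (measurable_snd.sub measurable_fst).ennreal_ofReal
  have hm : Measurable fun p : ℝ × ℝ => ENNReal.ofReal (p.1 - p.2) :=
    (measurable_fst.sub measurable_snd).ennreal_ofReal
  have hfin : ∀ u : ℝ × ℝ → ℝ, Integrable u π → ∫⁻ p, ENNReal.ofReal (u p) ∂π ≠ ∞ := by
    intro u hu
    refine ne_of_lt (lt_of_le_of_lt ?_ hu.2)
    refine lintegral_mono fun p => ?_
    rw [Real.enorm_eq_ofReal_abs]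
    exact ENNReal.ofReal_le_ofReal (le_abs_self _)
  -- key identity for bounded continuous nonnegative test functions
  have key : ∀ f : ℝ →ᵇ ℝ≥0,
      ∫⁻ p : ℝ × ℝ, (f p.1 : ℝ≥0∞) * ENNReal.ofReal (p.2 - p.1) ∂π
        = ∫⁻ p : ℝ × ℝ, (f p.1 : ℝ≥0∞) * ENNReal.ofReal (p.1 - p.2) ∂π := by
    intro f
    set g : ℝ → ℝ := fun x => (f x : ℝ) with hg
    have hgc : Continuous g := NNReal.continuous_coe.comp f.continuous
    obtain ⟨C, hC⟩ := f.bounded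
    have hgb : ∀ x, |g x| ≤ C + g 0 := by
      intro x
      have h1 : dist (f x) (f 0) ≤ C := hC x 0
      have h2 : |g x - g 0| = dist (f x) (f 0) := (NNReal.dist_eq (f x) (f 0)).symm
      have h3 : g x - g 0 ≤ |g x - g 0| := le_abs_self _
      have h4 : (0:ℝ) ≤ g x := (f x).coe_nonneg
      rw [abs_of_nonneg h4]
      linarith
    set u : ℝ × ℝ → ℝ := fun p => g p.1 * (p.2 - p.1) with hu
    have hui : Integrable u π := by
      refine hint.bdd_mul (c := C + g 0) ?_ (Filter.Eventually.of_forall fun p => by simpa [Real.norm_eq_abs] using hgb p.1)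
      exact (hgc.comp continuous_fst).aestronglyMeasurable
    have hzero : ∫ p, u p ∂π = 0 := hmart g hgc ⟨C + g 0, hgb⟩
    have h0 := integral_eq_lintegral_pos_part_sub_lintegral_neg_part hui
    rw [hzero] at h0
    have heq : (∫⁻ p, ENNReal.ofReal (u p) ∂π) = ∫⁻ p, ENNReal.ofReal (-(u p)) ∂π := by
      have h1 := hfin u hui
      have h2 := hfin (fun p => -(u p)) hui.neg
      have := sub_eq_zero.mp h0.symm
      exact (ENNReal.toReal_eq_toReal_iff' h1 h2).mp this
    calc ∫⁻ p : ℝ × ℝ, (f p.1 : ℝ≥0∞) * ENNReal.ofReal (p.2 - p.1) ∂π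
        = ∫⁻ p, ENNReal.ofReal (u p) ∂π := by
          refine lintegral_congr fun p => ?_
          rw [hu, ENNReal.ofReal_mul (f p.1).coe_nonneg, ENNReal.ofReal_coe_nnreal]
      _ = ∫⁻ p, ENNReal.ofReal (-(u p)) ∂π := heq
      _ = ∫⁻ p : ℝ × ℝ, (f p.1 : ℝ≥0∞) * ENNReal.ofReal (p.1 - p.2) ∂π := by
          refine lintegral_congr fun p => ?_
          have : -(u p) = g p.1 * (p.1 - p.2) := by rw [hu]; ring
          rw [this, ENNReal.ofReal_mul (f p.1).coe_nonneg, ENNReal.ofReal_coe_nnreal]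
  -- the two pushforward measures
  set hP : ℝ × ℝ → ℝ≥0∞ := fun p => ENNReal.ofReal (p.2 - p.1) with hPdef
  set hM : ℝ × ℝ → ℝ≥0∞ := fun p => ENNReal.ofReal (p.1 - p.2) with hMdef
  haveI : IsFiniteMeasure (π.withDensity hP) := isFiniteMeasure_withDensity (hfin _ hint)
  haveI : IsFiniteMeasure (π.withDensity hM) := isFiniteMeasure_withDensity (hfin _ (by
    have := hint.neg
    simp only [Pi.neg_def, neg_sub] at this
    exact this))
  set ξp : Measure ℝ := (π.withDensity hP).map Prod.fst with hxip
  set ξm : Measure ℝ := (π.withDensity hM).map Prod.fst with hxim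
  have hξ : ξp = ξm := by
    refine ext_of_forall_lintegral_eq_of_IsFiniteMeasure fun f => ?_
    have hfm : Measurable fun x : ℝ => (f x : ℝ≥0∞) :=
      f.continuous.measurable.coe_nnreal_ennreal
    rw [hxip, hxim, lintegral_map hfm measurable_fst, lintegral_map hfm measurable_fst,
      lintegral_withDensity_eq_lintegral_mul π hp, lintegral_withDensity_eq_lintegral_mul π hm]
    · simpa [mul_comm] using key f
    · exact hfm.comp measurable_fst
    · exact hfm.comp measurable_fst
  -- identify the pushforwards as withDensity over π.fst
  have hsplit : ∀ (h : ℝ × ℝ → ℝ≥0∞), Measurable h → ∀ s : Set ℝ, MeasurableSet s →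
      ((π.withDensity h).map Prod.fst) s
        = ∫⁻ x in s, ∫⁻ y, h (x, y) ∂π.condKernel x ∂π.fst := by
    intro h hh s hs
    rw [Measure.map_apply measurable_fst hs, withDensity_apply _ (measurable_fst hs)]
    have hpre : Prod.fst ⁻¹' s = s ×ˢ (univ : Set ℝ) := by
      ext p; simp
    rw [hpre]
    conv_lhs => rw [← π.disintegrate π.condKernel]
    rw [Measure.setLIntegral_compProd hh hs MeasurableSet.univ]
    simp [Measure.restrict_univ]
  have hGp : Measurable fun x : ℝ => ∫⁻ y, ENNReal.ofReal (y - x) ∂π.condKernel x :=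
    Measurable.lintegral_kernel_prod_right' hp
  have hGm : Measurable fun x : ℝ => ∫⁻ y, ENNReal.ofReal (x - y) ∂π.condKernel x :=
    Measurable.lintegral_kernel_prod_right' hm
  have hwd : π.fst.withDensity (fun x => ∫⁻ y, ENNReal.ofReal (y - x) ∂π.condKernel x)
      = π.fst.withDensity (fun x => ∫⁻ y, ENNReal.ofReal (x - y) ∂π.condKernel x) := by
    refine Measure.ext fun s hs => ?_
    rw [withDensity_apply _ hs, withDensity_apply _ hs, ← hsplit hP hp s hs,
      ← hsplit hM hm s hs, ← hxip, ← hxim, hξ]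
  exact (withDensity_eq_iff_of_sigmaFinite hGp.aemeasurable hGm.aemeasurable).mp hwd


lemma aux_pick_point (K : Measure ℝ) {T : Set ℝ} (S : Set ℝ)
    (hT : MeasurableSet T) (hS : MeasurableSet S)
    (hKT : K T ≠ 0) (hKS : K Sᶜ = 0) : ∃ z ∈ T, z ∈ S := by
  have h : K (T ∩ S) ≠ 0 := by
    intro h0
    apply hKT
    have := measure_inter_add_diff (μ := K) T hS
    have hdiff : K (T \ S) = 0 :=
      le_antisymm (le_of_le_of_eq (measure_mono (diff_subset_compl T S)) hKS) zero_le
    rw [h0, hdiff] at this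
    simpa using this.symm
  obtain ⟨z, hz⟩ := nonempty_of_measure_ne_zero h
  exact ⟨z, hz.1, hz.2⟩

/-- approximation of a support point of a martingale coupling by pairs of points
of a full-measure set on a common vertical line. -/
theorem martingale_support_pairs (μ ν : Measure ℝ) (hμ : MemM μ) (hν : MemM ν)
    (π : Measure (ℝ × ℝ)) (hπ : IsMartCoupling π μ ν)
    (G : Set (ℝ × ℝ)) (hG : MeasurableSet G) (hG1 : π G = 1)
    (x y : ℝ) (hxy : (x, y) ∈ mSupport π) :
    (x < y → ∀ ε > 0, ∃ x₁ y₁m y₁p : ℝ, (x₁, y₁m) ∈ G ∧ (x₁, y₁p) ∈ G ∧ y₁m ≤ y₁p ∧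
      max |x₁ - x| |y₁p - y| ≤ ε ∧ y₁m < x + ε) ∧
    (y < x → ∀ ε > 0, ∃ x₁ y₁m y₁p : ℝ, (x₁, y₁m) ∈ G ∧ (x₁, y₁p) ∈ G ∧ y₁m ≤ y₁p ∧
      max |x₁ - x| |y₁m - y| ≤ ε ∧ x - ε < y₁p) := by
  obtain ⟨hprob, hfsteq, hsndeq, hmart⟩ := hπ
  haveI : IsProbabilityMeasure π := hprob
  set K := π.condKernel with hK
  -- integrability of p.2 - p.1
  have hint : Integrable (fun p : ℝ × ℝ => p.2 - p.1) π := by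
    have h2 : Integrable (fun p : ℝ × ℝ => p.2) π := by
      have h := hν.2
      rw [← hsndeq] at h
      exact (integrable_map_measure aestronglyMeasurable_id measurable_snd.aemeasurable).mp h
    have h1 : Integrable (fun p : ℝ × ℝ => p.1) π := by
      have h := hμ.2
      rw [← hfsteq] at h
      exact (integrable_map_measure aestronglyMeasurable_id measurable_fst.aemeasurable).mp h
    exact h2.sub h1
  -- the a.e. fiber identity
  have hmean := aux_fiber_eq π hint hmart
  -- a.e. fibers are carried by G
  have hfib : ∀ᵐ x₁ ∂π.fst, K x₁ {y' | (x₁, y') ∈ G}ᶜ = 0 := by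
    have hGc : π Gᶜ = 0 := by
      have := measure_compl hG (measure_ne_top π G)
      rw [hG1, measure_univ] at this
      simpa using this
    have h0 : ∫⁻ x₁, K x₁ (Prod.mk x₁ ⁻¹' Gᶜ) ∂π.fst = 0 := by
      rw [← Measure.compProd_apply hG.compl, π.disintegrate π.condKernel, hGc]
    have hmeas : Measurable fun x₁ => K x₁ (Prod.mk x₁ ⁻¹' Gᶜ) :=
      Kernel.measurable_kernel_prodMk_left hG.compl
    have := (lintegral_eq_zero_iff hmeas).mp h0
    filter_upwards [this] with x₁ h
    exact h
  -- extraction of a good fiber near a support point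
  have extract : ∀ a b c d : ℝ, π (Ioo a b ×ˢ Ioo c d) ≠ 0 →
      ∃ x₁, x₁ ∈ Ioo a b ∧ K x₁ (Ioo c d) ≠ 0 ∧ K x₁ {y' | (x₁, y') ∈ G}ᶜ = 0 ∧
        ∫⁻ y', ENNReal.ofReal (y' - x₁) ∂K x₁ = ∫⁻ y', ENNReal.ofReal (x₁ - y') ∂K x₁ := by
    intro a b c d hU
    by_contra hcon
    push_neg at hcon
    apply hU
    rw [← π.disintegrate π.condKernel,
      Measure.compProd_apply (measurableSet_Ioo.prod measurableSet_Ioo)]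
    rw [lintegral_eq_zero_iff (Kernel.measurable_kernel_prodMk_left
      (measurableSet_Ioo.prod measurableSet_Ioo))]
    filter_upwards [hmean, hfib] with x₁ h1 h2
    rcases em (x₁ ∈ Ioo a b) with hx | hx
    · have hK0 := hcon x₁ hx
      have : K x₁ (Ioo c d) = 0 := by
        by_contra hne
        exact (hK0 hne h2) h1
      have hpre : Prod.mk x₁ ⁻¹' (Ioo a b ×ˢ Ioo c d) = Ioo c d := by
        ext y'; simp [hx]
      rw [hpre]; exact this
    · have hpre : Prod.mk x₁ ⁻¹' (Ioo a b ×ˢ Ioo c d) = (∅ : Set ℝ) := by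
        ext y'; simp [hx]
      rw [hpre]; exact measure_empty
  -- support hypothesis in usable form
  have hsupp : ∀ a b c d : ℝ, a < x → x < b → c < y → y < d →
      π (Ioo a b ×ˢ Ioo c d) ≠ 0 := by
    intro a b c d h1 h2 h3 h4
    exact hxy _ (prod_mem_nhds (Ioo_mem_nhds h1 h2) (Ioo_mem_nhds h3 h4))
  constructor
  · -- case x < y
    intro hlt ε hε
    set ε' := min ε ((y - x) / 3) with hε'def
    have hε' : 0 < ε' := lt_min hε (by linarith)
    have hε'le : ε' ≤ ε := min_le_left _ _
    have hε'3 : ε' ≤ (y - x) / 3 := min_le_right _ _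
    obtain ⟨x₁, hxI, hKJ, hKG, hfeq⟩ := extract (x - ε') (x + ε') (y - ε') (y + ε')
      (hsupp _ _ _ _ (by linarith) (by linarith) (by linarith) (by linarith))
    obtain ⟨hxI1, hxI2⟩ := hxI
    -- upper point
    obtain ⟨y₁p, hyJ, hyG⟩ := aux_pick_point (K x₁) _ measurableSet_Ioo
      (hG.preimage (measurable_prodMk_left)) hKJ hKG
    -- positive part is positive
    have hpos : ∫⁻ y', ENNReal.ofReal (y' - x₁) ∂K x₁ ≠ 0 := by
      intro h0
      apply hKJ
      by_contra hne
      have hlb : ENNReal.ofReal ε' * K x₁ (Ioo (y - ε') (y + ε')) ≤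
          ∫⁻ y', ENNReal.ofReal (y' - x₁) ∂K x₁ := by
        rw [← lintegral_indicator_const measurableSet_Ioo]
        refine lintegral_mono fun y' => ?_
        rcases em (y' ∈ Ioo (y - ε') (y + ε')) with hy | hy
        · rw [indicator_of_mem hy]
          exact ENNReal.ofReal_le_ofReal (by obtain ⟨h5, h6⟩ := hy; linarith)
        · rw [indicator_of_notMem hy]; exact zero_le
      rw [h0, nonpos_iff_eq_zero] at hlb
      exact hne ((mul_eq_zero.mp hlb).resolve_left
        (by simp [ENNReal.ofReal_eq_zero, not_le, hε']))
    -- hence negative part is positive, giving a point below x₁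
    have hneg : K x₁ (Iio x₁) ≠ 0 := by
      intro h0
      apply hpos
      rw [hfeq]
      have hae : ∀ᵐ y' ∂K x₁, y' ∉ Iio x₁ := (measure_eq_zero_iff_ae_notMem).mp h0
      rw [← lintegral_zero (μ := K x₁)]
      refine lintegral_congr_ae ?_
      filter_upwards [hae] with y' hy'
      rw [mem_Iio, not_lt] at hy'
      simp [ENNReal.ofReal_eq_zero]
      linarith
    obtain ⟨y₁m, hymI, hymG⟩ := aux_pick_point (K x₁) _ measurableSet_Iio
      (hG.preimage (measurable_prodMk_left)) hneg hKG
    rw [mem_Iio] at hymI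
    obtain ⟨hyJ1, hyJ2⟩ := hyJ
    refine ⟨x₁, y₁m, y₁p, hymG, hyG, by linarith, ?_, by linarith⟩
    rw [max_le_iff, abs_le, abs_le]
    constructor <;> constructor <;> linarith
  · -- case y < x
    intro hlt ε hε
    set ε' := min ε ((x - y) / 3) with hε'def
    have hε' : 0 < ε' := lt_min hε (by linarith)
    have hε'le : ε' ≤ ε := min_le_left _ _
    have hε'3 : ε' ≤ (x - y) / 3 := min_le_right _ _
    obtain ⟨x₁, hxI, hKJ, hKG, hfeq⟩ := extract (x - ε') (x + ε') (y - ε') (y + ε')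
      (hsupp _ _ _ _ (by linarith) (by linarith) (by linarith) (by linarith))
    obtain ⟨hxI1, hxI2⟩ := hxI
    -- lower point
    obtain ⟨y₁m, hyJ, hyG⟩ := aux_pick_point (K x₁) _ measurableSet_Ioo
      (hG.preimage (measurable_prodMk_left)) hKJ hKG
    -- negative part is positive
    have hpos : ∫⁻ y', ENNReal.ofReal (x₁ - y') ∂K x₁ ≠ 0 := by
      intro h0
      apply hKJ
      by_contra hne
      have hlb : ENNReal.ofReal ε' * K x₁ (Ioo (y - ε') (y + ε')) ≤
          ∫⁻ y', ENNReal.ofReal (x₁ - y') ∂K x₁ := by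
        rw [← lintegral_indicator_const measurableSet_Ioo]
        refine lintegral_mono fun y' => ?_
        rcases em (y' ∈ Ioo (y - ε') (y + ε')) with hy | hy
        · rw [indicator_of_mem hy]
          exact ENNReal.ofReal_le_ofReal (by obtain ⟨h5, h6⟩ := hy; linarith)
        · rw [indicator_of_notMem hy]; exact zero_le
      rw [h0, nonpos_iff_eq_zero] at hlb
      exact hne ((mul_eq_zero.mp hlb).resolve_left
        (by simp [ENNReal.ofReal_eq_zero, not_le, hε']))
    -- hence positive part is positive, giving a point above x₁
    have hneg : K x₁ (Ioi x₁) ≠ 0 := by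
      intro h0
      apply hpos
      rw [← hfeq]
      have hae : ∀ᵐ y' ∂K x₁, y' ∉ Ioi x₁ := (measure_eq_zero_iff_ae_notMem).mp h0
      rw [← lintegral_zero (μ := K x₁)]
      refine lintegral_congr_ae ?_
      filter_upwards [hae] with y' hy'
      rw [mem_Ioi, not_lt] at hy'
      simp [ENNReal.ofReal_eq_zero]
      linarith
    obtain ⟨y₁p, hypI, hypG⟩ := aux_pick_point (K x₁) _ measurableSet_Ioi
      (hG.preimage (measurable_prodMk_left)) hneg hKG
    rw [mem_Ioi] at hypI
    obtain ⟨hyJ1, hyJ2⟩ := hyJ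
    refine ⟨x₁, y₁m, y₁p, hyG, hypG, by linarith, ?_, by linarith⟩
    rw [max_le_iff, abs_le, abs_le]
    constructor <;> constructor <;> linarith

end
end

section
/- Let π be a martingale coupling of probability measures μ, ν ∈ M, and let (x,y), (x′,y′) ∈ spt(π) with x < x′. If either x < y′ < y or x > y′ > y, then π is not left-monotone. -/
open MeasureTheory Set Filter ProbabilityTheory

noncomputable section

lemma aux_setIntegral_Iic_zero {μ : Measure ℝ} [IsFiniteMeasure μ] {g : ℝ → ℝ}
    (hg : Integrable g μ)
    (H : ∀ f : ℝ → ℝ, Continuous f → (∃ C : ℝ, ∀ x, |f x| ≤ C) → ∫ x, f x * g x ∂μ = 0)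
    (a : ℝ) : ∫ x in Iic a, g x ∂μ = 0 := by
  set F : ℕ → ℝ → ℝ := fun n t => max 0 (min 1 ((n + 1 : ℝ) * (a - t) + 1)) with hF
  have hFcont : ∀ n, Continuous (F n) := fun n =>
    continuous_const.max (continuous_const.min (by continuity))
  have hFnonneg : ∀ n t, 0 ≤ F n t := fun n t => le_max_left _ _
  have hFbdd : ∀ n t, |F n t| ≤ 1 := by
    intro n t
    rw [abs_of_nonneg (hFnonneg n t)]
    exact max_le (by norm_num) (min_le_left _ _)
  have hzero : ∀ n, ∫ x, F n x * g x ∂μ = 0 := fun n => H _ (hFcont n) ⟨1, hFbdd n⟩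
  have hlim : Tendsto (fun n => ∫ x, F n x * g x ∂μ) atTop
      (nhds (∫ x, (Iic a).indicator g x ∂μ)) := by
    apply tendsto_integral_of_dominated_convergence (fun x => |g x|)
    · intro n
      exact (hFcont n).aestronglyMeasurable.mul hg.aestronglyMeasurable
    · exact hg.abs
    · intro n
      filter_upwards with t
      calc ‖F n t * g t‖ = |F n t| * |g t| := abs_mul _ _
        _ ≤ 1 * |g t| := mul_le_mul_of_nonneg_right (hFbdd n t) (abs_nonneg _)
        _ = |g t| := one_mul _
    · filter_upwards with t
      by_cases ht : t ≤ a
      · have h1 : ∀ n : ℕ, F n t = 1 := by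
          intro n
          have hge : (1:ℝ) ≤ (n + 1 : ℝ) * (a - t) + 1 := by
            have h0 : (0:ℝ) ≤ (n + 1 : ℝ) * (a - t) :=
              mul_nonneg (by positivity) (by linarith)
            linarith
          rw [show F n t = max 0 (min 1 ((n + 1 : ℝ) * (a - t) + 1)) from rfl,
            min_eq_left hge]
          exact max_eq_right zero_le_one
        have heq : (fun n : ℕ => F n t * g t) = fun _ => g t := by
          funext n; rw [h1 n, one_mul]
        rw [heq, indicator_of_mem (mem_Iic.mpr ht)]
        exact tendsto_const_nhds
      · push_neg at ht
        rw [indicator_of_notMem (by simpa using not_le.mpr ht)]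
        obtain ⟨N, hN⟩ := exists_nat_ge (1 / (t - a))
        have hev : ∀ n ≥ N, F n t * g t = 0 := by
          intro n hn
          have hta : (0:ℝ) < t - a := by linarith
          have h2 : (n + 1 : ℝ) * (a - t) + 1 ≤ 0 := by
            have h3 : (1 : ℝ) ≤ (N : ℝ) * (t - a) := by
              rw [div_le_iff₀ hta] at hN; linarith
            have h4 : (N : ℝ) ≤ (n : ℝ) + 1 := by
              have : (N : ℝ) ≤ n := Nat.cast_le.mpr hn
              linarith
            nlinarith
          have hFz : F n t = 0 := by
            have hmin : min (1:ℝ) ((n + 1 : ℝ) * (a - t) + 1) ≤ 0 :=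
              (min_le_right _ _).trans h2
            rw [show F n t = max 0 (min 1 ((n + 1 : ℝ) * (a - t) + 1)) from rfl]
            exact max_eq_left hmin
          rw [hFz, zero_mul]
        refine Tendsto.congr' ?_ tendsto_const_nhds
        filter_upwards [eventually_atTop.mpr ⟨N, hev⟩] with n hn
        exact hn.symm
  have hconst : (fun n => ∫ x, F n x * g x ∂μ) = fun _ => (0:ℝ) := funext hzero
  rw [hconst] at hlim
  have h0 : (0:ℝ) = ∫ x, (Iic a).indicator g x ∂μ :=
    tendsto_nhds_unique tendsto_const_nhds hlim
  rw [integral_indicator measurableSet_Iic] at h0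
  exact h0.symm

lemma aux_ae_zero {μ : Measure ℝ} [IsFiniteMeasure μ] {g : ℝ → ℝ}
    (hg : Integrable g μ)
    (H : ∀ f : ℝ → ℝ, Continuous f → (∃ C : ℝ, ∀ x, |f x| ≤ C) → ∫ x, f x * g x ∂μ = 0) :
    g =ᵐ[μ] 0 := by
  have hIic := aux_setIntegral_Iic_zero hg H
  have hgm : AEMeasurable g μ := hg.aemeasurable
  have hfin : ∀ h : ℝ → ℝ, (∀ x, |h x| ≤ |g x|) → AEMeasurable h μ →
      ∫⁻ x, ENNReal.ofReal (h x) ∂μ ≠ ⊤ := by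
    intro h hh hhm
    refine ne_of_lt (lt_of_le_of_lt ?_ hg.hasFiniteIntegral)
    refine lintegral_mono fun x => ?_
    calc ENNReal.ofReal (h x) ≤ ENNReal.ofReal |g x| :=
          ENNReal.ofReal_le_ofReal ((le_abs_self _).trans (hh x))
      _ = (‖g x‖₊ : ENNReal) := (Real.enorm_eq_ofReal_abs _).symm
  have hposfin := hfin g (fun x => le_refl _) hgm
  have hnegfin := hfin (fun x => -g x) (fun x => by rw [abs_neg]) hgm.neg
  set nu1 := μ.withDensity (fun t => ENNReal.ofReal (g t)) with hnu1
  set nu2 := μ.withDensity (fun t => ENNReal.ofReal (-g t)) with hnu2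
  haveI : IsFiniteMeasure nu1 := isFiniteMeasure_withDensity hposfin
  haveI : IsFiniteMeasure nu2 := isFiniteMeasure_withDensity hnegfin
  have hIiceq : ∀ a : ℝ, nu1 (Iic a) = nu2 (Iic a) := by
    intro a
    have hint : ∫ x in Iic a, g x ∂μ =
        (∫⁻ x in Iic a, ENNReal.ofReal (g x) ∂μ).toReal -
        (∫⁻ x in Iic a, ENNReal.ofReal (-g x) ∂μ).toReal :=
      integral_eq_lintegral_pos_part_sub_lintegral_neg_part hg.restrict
    rw [hIic a] at hint
    have h1fin : ∫⁻ x in Iic a, ENNReal.ofReal (g x) ∂μ ≠ ⊤ :=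
      ne_of_lt (lt_of_le_of_lt (setLIntegral_le_lintegral _ _) hposfin.lt_top)
    have h2fin : ∫⁻ x in Iic a, ENNReal.ofReal (-g x) ∂μ ≠ ⊤ :=
      ne_of_lt (lt_of_le_of_lt (setLIntegral_le_lintegral _ _) hnegfin.lt_top)
    have heq : (∫⁻ x in Iic a, ENNReal.ofReal (g x) ∂μ).toReal =
        (∫⁻ x in Iic a, ENNReal.ofReal (-g x) ∂μ).toReal := by linarith
    rw [hnu1, hnu2, withDensity_apply _ measurableSet_Iic,
      withDensity_apply _ measurableSet_Iic]
    exact (ENNReal.toReal_eq_toReal_iff' h1fin h2fin).mp heq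
  have hnueq : nu1 = nu2 := Measure.ext_of_Iic nu1 nu2 hIiceq
  have hae : (fun t => ENNReal.ofReal (g t)) =ᵐ[μ] fun t => ENNReal.ofReal (-g t) :=
    (withDensity_eq_iff_of_sigmaFinite (hgm.ennreal_ofReal) (hgm.neg.ennreal_ofReal)).mp hnueq
  filter_upwards [hae] with t ht
  simp only [Pi.zero_apply]
  rcases le_total (g t) 0 with h'|h'
  · have h2 : ENNReal.ofReal (-g t) = 0 := by
      rw [← ht]; exact ENNReal.ofReal_eq_zero.mpr h'
    have := ENNReal.ofReal_eq_zero.mp h2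
    linarith
  · have h2 : ENNReal.ofReal (g t) = 0 := by
      rw [ht]; exact ENNReal.ofReal_eq_zero.mpr (by linarith)
    have := ENNReal.ofReal_eq_zero.mp h2
    linarith

lemma bary_ge_of_Iio_zero {K : Measure ℝ} [IsProbabilityMeasure K]
    (hi : Integrable (fun b => b) K) {c : ℝ} (h : K (Iio c) = 0) : c ≤ ∫ b, b ∂K := by
  have hae : ∀ᵐ b ∂K, c ≤ b := by
    rw [ae_iff]
    convert h using 2
    ext b
    simp [not_le]
  calc c = ∫ _, c ∂K := by simp
    _ ≤ ∫ b, b ∂K := integral_mono_ae (integrable_const c) hi hae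

lemma bary_le_of_Ioi_zero {K : Measure ℝ} [IsProbabilityMeasure K]
    (hi : Integrable (fun b => b) K) {c : ℝ} (h : K (Ioi c) = 0) : ∫ b, b ∂K ≤ c := by
  have hae : ∀ᵐ b ∂K, b ≤ c := by
    rw [ae_iff]
    convert h using 2
    ext b
    simp [not_le]
  calc ∫ b, b ∂K ≤ ∫ _, c ∂K := integral_mono_ae hi (integrable_const c) hae
    _ = c := by simp

theorem not_leftMonotone_of_support' (μ ν : Measure ℝ) (hμ : MemM μ) (hν : MemM ν)
    (π : Measure (ℝ × ℝ)) (hπ : IsMartCoupling π μ ν)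
    (x y x' y' : ℝ) (h₁ : (x, y) ∈ mSupport π) (h₂ : (x', y') ∈ mSupport π)
    (hxx' : x < x') (hcase : (x < y' ∧ y' < y) ∨ (y < y' ∧ y' < x)) :
    ¬ LeftMonotone π := by
  obtain ⟨hprob, hfst, hsnd, hmart⟩ := hπ
  rintro ⟨Γ, hΓm, hΓ1, hmono⟩
  haveI : IsProbabilityMeasure π := hprob
  -- choice of ε
  have hyy' : y ≠ y' := by rcases hcase with ⟨h1, h2⟩ | ⟨h1, h2⟩ <;> intro h <;> linarith
  have hxy' : x ≠ y' := by rcases hcase with ⟨h1, h2⟩ | ⟨h1, h2⟩ <;> intro h <;> linarith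
  set ε : ℝ := min (min ((x' - x) / 2) (|y - y'| / 2)) (|x - y'| / 2) with hεdef
  have hyy'pos : 0 < |y - y'| := abs_pos.mpr (sub_ne_zero_of_ne hyy')
  have hxy'pos : 0 < |x - y'| := abs_pos.mpr (sub_ne_zero_of_ne hxy')
  have hε : 0 < ε :=
    lt_min (lt_min (by linarith) (by linarith)) (by linarith)
  have hεa : ε ≤ (x' - x) / 2 := (min_le_left _ _).trans (min_le_left _ _)
  have hεb : ε ≤ |y - y'| / 2 := (min_le_left _ _).trans (min_le_right _ _)
  have hεc : ε ≤ |x - y'| / 2 := min_le_right _ _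
  -- basic measure facts
  have hΓ0 : π Γᶜ = 0 := (prob_compl_eq_zero_iff hΓm).mpr hΓ1
  set R1 : Set (ℝ × ℝ) := Ioo (x - ε) (x + ε) ×ˢ Ioo (y - ε) (y + ε) with hR1def
  set R2 : Set (ℝ × ℝ) := Ioo (x' - ε) (x' + ε) ×ˢ Ioo (y' - ε) (y' + ε) with hR2def
  have hR1m : MeasurableSet R1 := measurableSet_Ioo.prod measurableSet_Ioo
  have hR2m : MeasurableSet R2 := measurableSet_Ioo.prod measurableSet_Ioo
  have hinter : ∀ R : Set (ℝ × ℝ), π R ≠ 0 → π (Γ ∩ R) ≠ 0 := by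
    intro R hR h0
    apply hR
    have hsub : R ⊆ (Γ ∩ R) ∪ Γᶜ := by
      intro p hp
      by_cases h : p ∈ Γ
      · exact Or.inl ⟨h, hp⟩
      · exact Or.inr h
    have hle : π R ≤ π (Γ ∩ R) + π Γᶜ :=
      (measure_mono hsub).trans (measure_union_le _ _)
    rw [h0, hΓ0, add_zero] at hle
    exact le_antisymm hle zero_le
  have hR1n : π (Γ ∩ R1) ≠ 0 := by
    apply hinter
    apply h₁
    exact (isOpen_Ioo.prod isOpen_Ioo).mem_nhds
      ⟨mem_Ioo.mpr ⟨by linarith, by linarith⟩, mem_Ioo.mpr ⟨by linarith, by linarith⟩⟩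
  have hR2n : π (Γ ∩ R2) ≠ 0 := by
    apply hinter
    apply h₂
    exact (isOpen_Ioo.prod isOpen_Ioo).mem_nhds
      ⟨mem_Ioo.mpr ⟨by linarith, by linarith⟩, mem_Ioo.mpr ⟨by linarith, by linarith⟩⟩
  obtain ⟨⟨x₁, y₁⟩, hp2Γ, hp2R⟩ : (Γ ∩ R2).Nonempty := by
    rw [nonempty_iff_ne_empty]
    intro h
    apply hR2n
    rw [h]
    exact measure_empty
  -- disintegration
  have hdis : π.fst ⊗ₘ π.condKernel = π := π.disintegrate π.condKernel
  -- integrability of coordinates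
  have hXπ : Integrable (fun p : ℝ × ℝ => p.1) π := by
    have h0 : Integrable (fun t : ℝ => t) μ := hμ.2
    rw [← hfst] at h0
    exact (integrable_map_measure aestronglyMeasurable_id measurable_fst.aemeasurable).mp h0
  have hYπ : Integrable (fun p : ℝ × ℝ => p.2) π := by
    have h0 : Integrable (fun t : ℝ => t) ν := hν.2
    rw [← hsnd] at h0
    exact (integrable_map_measure aestronglyMeasurable_id measurable_snd.aemeasurable).mp h0
  have hYc : Integrable (fun p : ℝ × ℝ => p.2) (π.fst ⊗ₘ π.condKernel) := by
    rw [hdis]; exact hYπ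
  obtain ⟨hKint, hKnint⟩ := (Measure.integrable_compProd_iff hYc.aestronglyMeasurable).mp hYc
  -- barycenter
  set bary : ℝ → ℝ := fun a => ∫ b, b ∂(π.condKernel a) with hbary
  have hbmeas : StronglyMeasurable bary :=
    MeasureTheory.StronglyMeasurable.integral_kernel_prod_right
      (measurable_snd.stronglyMeasurable)
  have hbint : Integrable bary π.fst :=
    Integrable.mono' hKnint hbmeas.aestronglyMeasurable
      (ae_of_all _ fun a => norm_integral_le_integral_norm _)
  have hXf : Integrable (fun t : ℝ => t) π.fst := by rw [hfst]; exact hμ.2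
  have hgint : Integrable (fun a => bary a - a) π.fst := hbint.sub hXf
  -- martingale property : bary = id a.e.
  have hmean : ∀ᵐ a ∂π.fst, bary a - a = 0 := by
    apply aux_ae_zero hgint
    rintro f hfc ⟨C, hC⟩
    have hCnn : 0 ≤ C := le_trans (abs_nonneg _) (hC 0)
    have hFint : Integrable (fun p : ℝ × ℝ => f p.1 * (p.2 - p.1)) π := by
      have hb : Integrable (fun p : ℝ × ℝ => C * (|p.1| + |p.2|)) π :=
        (hXπ.abs.add hYπ.abs).const_mul C
      refine hb.mono' ?_ (ae_of_all _ ?_)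
      · exact ((hfc.comp continuous_fst).mul
          (continuous_snd.sub continuous_fst)).aestronglyMeasurable
      · intro p
        have htri : |p.2 - p.1| ≤ |p.1| + |p.2| := by
          calc |p.2 - p.1| = |p.2 + -p.1| := by rw [sub_eq_add_neg]
            _ ≤ |p.2| + |-p.1| := abs_add_le _ _
            _ = |p.1| + |p.2| := by rw [abs_neg]; ring
        calc ‖f p.1 * (p.2 - p.1)‖ = |f p.1| * |p.2 - p.1| := by
              rw [Real.norm_eq_abs, abs_mul]
          _ ≤ C * (|p.1| + |p.2|) :=
              mul_le_mul (hC p.1) htri (abs_nonneg _) hCnn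
    have h0 : ∫ p : ℝ × ℝ, f p.1 * (p.2 - p.1) ∂π = 0 := hmart f hfc ⟨C, hC⟩
    rw [← hdis] at h0 hFint
    rw [Measure.integral_compProd hFint] at h0
    rw [← h0]
    apply integral_congr_ae
    filter_upwards [hKint] with a hKa
    haveI : IsProbabilityMeasure (π.condKernel a) := inferInstance
    rw [integral_const_mul]
    congr 1
    rw [integral_sub hKa (integrable_const a), integral_const]
    simp [hbary]
  -- Γ has full fibers a.e.
  have hΓae : ∀ᵐ a ∂π.fst, π.condKernel a (Prod.mk a ⁻¹' Γ) = 1 := by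
    have h0 : (π.fst ⊗ₘ π.condKernel) Γᶜ = 0 := by rw [hdis]; exact hΓ0
    rw [Measure.compProd_apply hΓm.compl] at h0
    have h1 : ∀ᵐ a ∂π.fst, π.condKernel a (Prod.mk a ⁻¹' Γᶜ) = 0 :=
      (lintegral_eq_zero_iff (Kernel.measurable_kernel_prodMk_left hΓm.compl)).mp h0
    filter_upwards [h1] with a ha
    haveI : IsProbabilityMeasure (π.condKernel a) := inferInstance
    have hr : Prod.mk a ⁻¹' Γᶜ = (Prod.mk a ⁻¹' Γ)ᶜ := rfl
    rw [hr] at ha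
    exact (prob_compl_eq_zero_iff (measurable_prodMk_left hΓm)).mp ha
  -- positive fiber mass over R1
  have hfreq : ¬ ∀ᵐ a ∂π.fst, π.condKernel a (Prod.mk a ⁻¹' (Γ ∩ R1)) = 0 := by
    intro hae
    apply hR1n
    rw [← hdis, Measure.compProd_apply (hΓm.inter hR1m)]
    exact (lintegral_eq_zero_iff
      (Kernel.measurable_kernel_prodMk_left (hΓm.inter hR1m))).mpr hae
  obtain ⟨a, ⟨hmean_a, hΓa, hKa⟩, hfib⟩ :=
    (((hmean.and (hΓae.and hKint)).and_frequently (Filter.not_eventually.mp hfreq))).exists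
  haveI : IsProbabilityMeasure (π.condKernel a) := inferInstance
  set F : Set ℝ := Prod.mk a ⁻¹' Γ with hFdef
  have hFm : MeasurableSet F := measurable_prodMk_left hΓm
  have hFc0 : π.condKernel a Fᶜ = 0 := (prob_compl_eq_zero_iff hFm).mpr hΓa
  have hsplit : Prod.mk a ⁻¹' (Γ ∩ R1) = F ∩ Prod.mk a ⁻¹' R1 := rfl
  have haI : a ∈ Ioo (x - ε) (x + ε) := by
    by_contra h
    apply hfib
    have hE : Prod.mk a ⁻¹' R1 = ∅ := by
      rw [hR1def]
      exact Set.mk_preimage_prod_right_eq_empty h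
    rw [hsplit, hE, inter_empty]
    exact measure_empty
  have hfibne : (F ∩ Ioo (y - ε) (y + ε)).Nonempty := by
    rw [nonempty_iff_ne_empty]
    intro h
    apply hfib
    rw [hsplit, hR1def, Set.mk_preimage_prod_right haI, h]
    exact measure_empty
  obtain ⟨w, hwF, hwI⟩ := hfibne
  have hmean_a' : bary a = a := by linarith [hmean_a]
  have hzero_of_empty_lo : ∀ c : ℝ, F ∩ Iio c = ∅ → π.condKernel a (Iio c) = 0 := by
    intro c hc
    have hsub : Iio c ⊆ Fᶜ := by
      intro b hb hbF
      have hmem : b ∈ F ∩ Iio c := ⟨hbF, hb⟩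
      rw [hc] at hmem
      exact absurd hmem (notMem_empty b)
    exact le_antisymm ((measure_mono hsub).trans_eq hFc0) zero_le
  have hzero_of_empty_hi : ∀ c : ℝ, F ∩ Ioi c = ∅ → π.condKernel a (Ioi c) = 0 := by
    intro c hc
    have hsub : Ioi c ⊆ Fᶜ := by
      intro b hb hbF
      have hmem : b ∈ F ∩ Ioi c := ⟨hbF, hb⟩
      rw [hc] at hmem
      exact absurd hmem (notMem_empty b)
    exact le_antisymm ((measure_mono hsub).trans_eq hFc0) zero_le
  obtain ⟨hx₁I, hy₁I⟩ := hp2R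
  rcases hcase with ⟨hc1, hc2⟩ | ⟨hc1, hc2⟩
  · -- x < y' < y : w is the high point, find a low point
    have habsb : |y - y'| = y - y' := abs_of_pos (by linarith)
    have habsc : |x - y'| = y' - x := by rw [abs_sub_comm]; exact abs_of_pos (by linarith)
    rw [habsb] at hεb
    rw [habsc] at hεc
    obtain ⟨ym, hymF, hymlt⟩ : ∃ ym ∈ F, ym < y' - ε := by
      by_contra h
      push_neg at h
      have hemp : F ∩ Iio (y' - ε) = ∅ := by
        ext b
        simp only [mem_inter_iff, mem_Iio, mem_empty_iff_false, iff_false, not_and, not_lt]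
        exact fun hb => h b hb
      have hge : y' - ε ≤ bary a := bary_ge_of_Iio_zero hKa (hzero_of_empty_lo _ hemp)
      have := haI.2
      linarith [hmean_a', hge]
    have := hmono a ym w x₁ y₁ hymF hwF hp2Γ
      (by have := haI.2; have := hx₁I.1; linarith)
      (by have := hwI.1; linarith)
    exact this ⟨by have := hy₁I.1; linarith, by have := hy₁I.2; have := hwI.1; linarith⟩
  · -- y < y' < x : w is the low point, find a high point
    have habsb : |y - y'| = y' - y := by rw [abs_sub_comm]; exact abs_of_pos (by linarith)
    have habsc : |x - y'| = x - y' := abs_of_pos (by linarith)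
    rw [habsb] at hεb
    rw [habsc] at hεc
    obtain ⟨yp, hypF, hyplt⟩ : ∃ yp ∈ F, y' + ε < yp := by
      by_contra h
      push_neg at h
      have hemp : F ∩ Ioi (y' + ε) = ∅ := by
        ext b
        simp only [mem_inter_iff, mem_Ioi, mem_empty_iff_false, iff_false, not_and, not_lt]
        exact fun hb => h b hb
      have hle : bary a ≤ y' + ε := bary_le_of_Ioi_zero hKa (hzero_of_empty_hi _ hemp)
      have := haI.1
      linarith [hmean_a', hle]
    have := hmono a w yp x₁ y₁ hwF hypF hp2Γ
      (by have := haI.2; have := hx₁I.1; linarith)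
      (by have := hwI.2; linarith)
    exact this ⟨by have := hy₁I.1; have := hwI.2; linarith, by have := hy₁I.2; linarith⟩


/-- a forbidden configuration in the support implies the coupling is not
left-monotone. -/
theorem not_leftMonotone_of_support (μ ν : Measure ℝ) (hμ : MemM μ) (hν : MemM ν)
    (π : Measure (ℝ × ℝ)) (hπ : IsMartCoupling π μ ν)
    (x y x' y' : ℝ) (h₁ : (x, y) ∈ mSupport π) (h₂ : (x', y') ∈ mSupport π)
    (hxx' : x < x') (hcase : (x < y' ∧ y' < y) ∨ (y < y' ∧ y' < x)) :
    ¬ LeftMonotone π := by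
  exact not_leftMonotone_of_support' μ ν hμ hν π hπ x y x' y' h₁ h₂ hxx' hcase

end
end

section
/- Let n ≥ 2 and let X = (x₁,…,x_n), Y = (y₁,…,y_n), A = (a₁,…,a_n), B = (b₁,…,b_n) ∈ ℝⁿ satisfy ∑ᵢ aᵢ = 1, ∑ᵢ aᵢxᵢ = 0, ∑ⱼ bⱼ = 1, ∑ⱼ bⱼyⱼ = 0, and assume the entries of X are pairwise distinct and the entries of Y are pairwise distinct. Let Γ ⊆ M_{n×n}(ℝ) be the set of matrices M = (m_{ij}) satisfying M·𝟙 = A, 𝟙ᵀ·M = Bᵀ, and M·Y = Diag(A)·X (where 𝟙 = (1,…,1)ᵀ and Diag(A) is the diagonal matrix with entries a₁,…,a_n). Then the map sending M ∈ Γ to its submatrix (m_{ij})_{1 ≤ i ≤ n−1, 1 ≤ j ≤ n−2} of the n−1 upper rows and n−2 leftmost columns is an affine bijection from Γ onto M_{(n−1)×(n−2)}(ℝ); in particular Γ is a nonempty affine subspace of M_{n×n}(ℝ) of dimension (n−1)(n−2). -/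
open MeasureTheory Set Filter ProbabilityTheory

noncomputable section

namespace MGHelp

variable {m : ℕ}

/-- Extension of an `(m+1) × m` matrix to the first `m+1` rows of an `(m+2)×(m+2)` matrix,
filling the two last columns so that row sums are `a` and `Y`-weighted row sums are `c`. -/
def rowExt (Y a c : Fin (m+2) → ℝ) (N : Matrix (Fin (m+1)) (Fin m) ℝ)
    (i : Fin (m+1)) (j : Fin (m+2)) : ℝ :=
  if h : (j : ℕ) < m then N i ⟨j, h⟩
  else if (j : ℕ) = m then
    ((c ⟨i, by omega⟩ - ∑ k : Fin m, N i k * Y ⟨k, by omega⟩)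
        - (a ⟨i, by omega⟩ - ∑ k : Fin m, N i k) * Y ⟨m+1, by omega⟩)
      / (Y ⟨m, by omega⟩ - Y ⟨m+1, by omega⟩)
  else (a ⟨i, by omega⟩ - ∑ k : Fin m, N i k)
      - ((c ⟨i, by omega⟩ - ∑ k : Fin m, N i k * Y ⟨k, by omega⟩)
        - (a ⟨i, by omega⟩ - ∑ k : Fin m, N i k) * Y ⟨m+1, by omega⟩)
      / (Y ⟨m, by omega⟩ - Y ⟨m+1, by omega⟩)

/-- Full reconstruction: last row determined by column sums `b`. -/
def recon (Y a b c : Fin (m+2) → ℝ) (N : Matrix (Fin (m+1)) (Fin m) ℝ) :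
    Matrix (Fin (m+2)) (Fin (m+2)) ℝ :=
  Matrix.of fun i j =>
    if h : (i : ℕ) < m+1 then rowExt Y a c N ⟨i, h⟩ j
    else b j - ∑ k : Fin (m+1), rowExt Y a c N k j

lemma sum_split (f : Fin (m+2) → ℝ) :
    ∑ j, f j = (∑ k : Fin m, f ⟨k, by omega⟩) + f ⟨m, by omega⟩ + f ⟨m+1, by omega⟩ := by
  rw [Fin.sum_univ_castSucc, Fin.sum_univ_castSucc]; rfl

lemma sum_split1 (f : Fin (m+2) → ℝ) :
    ∑ j, f j = (∑ k : Fin (m+1), f ⟨k, by omega⟩) + f ⟨m+1, by omega⟩ := by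
  rw [Fin.sum_univ_castSucc]; rfl

lemma recon_castLE (Y a b c : Fin (m+2) → ℝ) (N : Matrix (Fin (m+1)) (Fin m) ℝ)
    (i : Fin (m+1)) (j : Fin m) :
    recon Y a b c N ⟨i, by omega⟩ ⟨j, by omega⟩ = N i j := by
  simp only [recon, Matrix.of_apply, rowExt]
  rw [dif_pos (by omega : (i:ℕ) < m+1), dif_pos (by omega : (j:ℕ) < m)]

lemma rowExt_lt (Y a c : Fin (m+2) → ℝ) (N : Matrix (Fin (m+1)) (Fin m) ℝ)
    (i : Fin (m+1)) (k : Fin m) :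
    rowExt Y a c N i ⟨k, by omega⟩ = N i k := by
  simp only [rowExt]; rw [dif_pos (by omega : (k:ℕ) < m)]

lemma rowExt_q (Y a c : Fin (m+2) → ℝ) (N : Matrix (Fin (m+1)) (Fin m) ℝ)
    (i : Fin (m+1)) :
    rowExt Y a c N i ⟨m, by omega⟩ =
    ((c ⟨i, by omega⟩ - ∑ k : Fin m, N i k * Y ⟨k, by omega⟩)
        - (a ⟨i, by omega⟩ - ∑ k : Fin m, N i k) * Y ⟨m+1, by omega⟩)
      / (Y ⟨m, by omega⟩ - Y ⟨m+1, by omega⟩) := by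
  simp [rowExt]

lemma rowExt_p (Y a c : Fin (m+2) → ℝ) (N : Matrix (Fin (m+1)) (Fin m) ℝ)
    (i : Fin (m+1)) :
    rowExt Y a c N i ⟨m+1, by omega⟩ =
    (a ⟨i, by omega⟩ - ∑ k : Fin m, N i k)
      - ((c ⟨i, by omega⟩ - ∑ k : Fin m, N i k * Y ⟨k, by omega⟩)
        - (a ⟨i, by omega⟩ - ∑ k : Fin m, N i k) * Y ⟨m+1, by omega⟩)
      / (Y ⟨m, by omega⟩ - Y ⟨m+1, by omega⟩) := by
  simp [rowExt]

lemma rowExt_rowsum (Y a c : Fin (m+2) → ℝ) (N : Matrix (Fin (m+1)) (Fin m) ℝ)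
    (i : Fin (m+1)) :
    ∑ j, rowExt Y a c N i j = a ⟨i, by omega⟩ := by
  rw [sum_split, rowExt_q, rowExt_p,
    Finset.sum_congr rfl (fun k _ => rowExt_lt Y a c N i k)]
  ring

lemma rowExt_wsum (Y a c : Fin (m+2) → ℝ) (N : Matrix (Fin (m+1)) (Fin m) ℝ)
    (hY : Y ⟨m, by omega⟩ ≠ Y ⟨m+1, by omega⟩) (i : Fin (m+1)) :
    ∑ j, rowExt Y a c N i j * Y j = c ⟨i, by omega⟩ := by
  rw [sum_split (fun j => rowExt Y a c N i j * Y j)]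
  rw [show (∑ k : Fin m, rowExt Y a c N i ⟨k, by omega⟩ * Y ⟨k, by omega⟩)
      = ∑ k : Fin m, N i k * Y ⟨k, by omega⟩ from
    Finset.sum_congr rfl (fun k _ => by rw [rowExt_lt]), rowExt_q, rowExt_p]
  have hd : Y ⟨m, by omega⟩ - Y ⟨m+1, by omega⟩ ≠ 0 := sub_ne_zero.mpr hY
  field_simp
  ring


lemma recon_top (Y a b c : Fin (m+2) → ℝ) (N : Matrix (Fin (m+1)) (Fin m) ℝ)
    (i : Fin (m+1)) (j : Fin (m+2)) :
    recon Y a b c N ⟨i, by omega⟩ j = rowExt Y a c N i j := by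
  simp only [recon, Matrix.of_apply]
  rw [dif_pos (by exact i.isLt)]

lemma recon_bot (Y a b c : Fin (m+2) → ℝ) (N : Matrix (Fin (m+1)) (Fin m) ℝ)
    (j : Fin (m+2)) :
    recon Y a b c N ⟨m+1, by omega⟩ j = b j - ∑ k : Fin (m+1), rowExt Y a c N k j := by
  simp only [recon, Matrix.of_apply]
  rw [dif_neg (by omega)]

/-- Every index of `Fin (m+2)` is a cast of `Fin (m+1)` or the last one. -/
lemma fin_cases' (i : Fin (m+2)) :
    (∃ k : Fin (m+1), i = ⟨k, by omega⟩) ∨ i = ⟨m+1, by omega⟩ := by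
  rcases lt_or_ge (i : ℕ) (m+1) with h | h
  · exact Or.inl ⟨⟨i, h⟩, by ext; rfl⟩
  · exact Or.inr (by ext; simp; omega)

lemma recon_mem (Y a b c : Fin (m+2) → ℝ) (N : Matrix (Fin (m+1)) (Fin m) ℝ)
    (hY : Y ⟨m, by omega⟩ ≠ Y ⟨m+1, by omega⟩)
    (h1 : ∑ i, a i = ∑ j, b j) (h2 : ∑ i, c i = ∑ j, b j * Y j) :
    (∀ i, ∑ j, recon Y a b c N i j = a i) ∧
    (∀ j, ∑ i, recon Y a b c N i j = b j) ∧
    (∀ i, ∑ j, recon Y a b c N i j * Y j = c i) := by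
  have hcol : ∀ j, ∑ i, recon Y a b c N i j = b j := by
    intro j
    rw [sum_split1 (fun i => recon Y a b c N i j), recon_bot,
      Finset.sum_congr rfl (fun k _ => recon_top Y a b c N k j)]
    ring
  refine ⟨?_, hcol, ?_⟩
  · intro i
    rcases fin_cases' i with ⟨k, rfl⟩ | rfl
    · rw [Finset.sum_congr rfl (fun j _ => recon_top Y a b c N k j)]
      exact rowExt_rowsum Y a c N k
    · rw [Finset.sum_congr rfl (fun j _ => recon_bot Y a b c N j),
        Finset.sum_sub_distrib, Finset.sum_comm]
      rw [Finset.sum_congr rfl (fun k (_ : k ∈ Finset.univ) => rowExt_rowsum Y a c N k)]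
      rw [sum_split1 a] at h1
      linarith [h1]
  · intro i
    rcases fin_cases' i with ⟨k, rfl⟩ | rfl
    · rw [Finset.sum_congr rfl (fun j _ => by rw [recon_top Y a b c N k j])]
      exact rowExt_wsum Y a c N hY k
    · rw [Finset.sum_congr rfl (fun j (_ : j ∈ Finset.univ) => by rw [recon_bot Y a b c N j])]
      simp only [sub_mul, Finset.sum_sub_distrib, Finset.sum_mul]
      rw [Finset.sum_comm]
      rw [Finset.sum_congr rfl (fun k (_ : k ∈ Finset.univ) =>
        rowExt_wsum Y a c N hY k)]
      rw [sum_split1 c] at h2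
      linarith [h2]

lemma recon_unique (Y a b c : Fin (m+2) → ℝ) (M : Matrix (Fin (m+2)) (Fin (m+2)) ℝ)
    (hY : Y ⟨m, by omega⟩ ≠ Y ⟨m+1, by omega⟩)
    (h1 : ∀ i, ∑ j, M i j = a i) (h2 : ∀ j, ∑ i, M i j = b j)
    (h3 : ∀ i, ∑ j, M i j * Y j = c i) :
    recon Y a b c (Matrix.of fun i j => M ⟨i, by omega⟩ ⟨j, by omega⟩) = M := by
  set N : Matrix (Fin (m+1)) (Fin m) ℝ := Matrix.of fun i j => M ⟨i, by omega⟩ ⟨j, by omega⟩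
  have hd : Y ⟨m, by omega⟩ - Y ⟨m+1, by omega⟩ ≠ 0 := sub_ne_zero.mpr hY
  -- first: top rows agree with rowExt
  have htop : ∀ (k : Fin (m+1)) (j : Fin (m+2)), rowExt Y a c N k j = M ⟨k, by omega⟩ j := by
    intro k j
    have e1 := h1 ⟨k, by omega⟩
    have e3 := h3 ⟨k, by omega⟩
    rw [sum_split (fun j => M ⟨k, by omega⟩ j)] at e1
    rw [sum_split (fun j => M ⟨k, by omega⟩ j * Y j)] at e3
    have hNk : ∀ (l : Fin m), N k l = M ⟨k, by omega⟩ ⟨l, by omega⟩ := fun l => rfl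
    rcases lt_or_ge (j : ℕ) m with hj | hj
    · have : j = ⟨(j:ℕ), by omega⟩ := by ext; rfl
      rw [this]
      exact rowExt_lt Y a c N k ⟨j, hj⟩
    · -- j is one of the last two columns
      have hq : M ⟨k, by omega⟩ ⟨m, by omega⟩ =
          ((c ⟨k, by omega⟩ - ∑ l : Fin m, N k l * Y ⟨l, by omega⟩)
            - (a ⟨k, by omega⟩ - ∑ l : Fin m, N k l) * Y ⟨m+1, by omega⟩)
          / (Y ⟨m, by omega⟩ - Y ⟨m+1, by omega⟩) := by
        rw [eq_div_iff hd]
        have hσ : (∑ l : Fin m, N k l) = ∑ l : Fin m, M ⟨k, by omega⟩ ⟨l, by omega⟩ := rfl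
        have hτ : (∑ l : Fin m, N k l * Y ⟨l, by omega⟩)
            = ∑ l : Fin m, M ⟨k, by omega⟩ ⟨l, by omega⟩ * Y ⟨l, by omega⟩ := rfl
        rw [hσ, hτ]
        linear_combination e3 - Y ⟨m+1, by omega⟩ * e1
      rcases (by omega : (j:ℕ) = m ∨ (j:ℕ) = m+1) with hj' | hj'
      · have : j = ⟨m, by omega⟩ := by ext; exact hj'
        rw [this, rowExt_q, hq]
      · have hjj : j = ⟨m+1, by omega⟩ := by ext; exact hj'
        rw [hjj, rowExt_p, ← hq]
        have hσ : (∑ l : Fin m, N k l) = ∑ l : Fin m, M ⟨k, by omega⟩ ⟨l, by omega⟩ := rfl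
        rw [hσ]
        linarith [e1]
  ext i j
  rcases fin_cases' i with ⟨k, rfl⟩ | rfl
  · rw [recon_top, htop]
  · rw [recon_bot]
    have e2 := h2 j
    rw [sum_split1 (fun i => M i j)] at e2
    rw [Finset.sum_congr rfl (fun k (_ : k ∈ Finset.univ) => htop k j)]
    linarith [e2]


lemma rowExt_add (Y a a' c c' : Fin (m+2) → ℝ) (N N' : Matrix (Fin (m+1)) (Fin m) ℝ)
    (i : Fin (m+1)) (j : Fin (m+2)) :
    rowExt Y (a + a') (c + c') (N + N') i j
      = rowExt Y a c N i j + rowExt Y a' c' N' i j := by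
  simp only [rowExt, Matrix.add_apply, Pi.add_apply, Finset.sum_add_distrib, add_mul]
  split_ifs <;> ring

lemma rowExt_smul (Y a c : Fin (m+2) → ℝ) (N : Matrix (Fin (m+1)) (Fin m) ℝ)
    (t : ℝ) (i : Fin (m+1)) (j : Fin (m+2)) :
    rowExt Y (t • a) (t • c) (t • N) i j = t * rowExt Y a c N i j := by
  simp only [rowExt, Matrix.smul_apply, Pi.smul_apply, smul_eq_mul, mul_assoc,
    ← Finset.mul_sum]
  split_ifs <;> ring

lemma recon_add (Y a a' b b' c c' : Fin (m+2) → ℝ) (N N' : Matrix (Fin (m+1)) (Fin m) ℝ) :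
    recon Y (a + a') (b + b') (c + c') (N + N')
      = recon Y a b c N + recon Y a' b' c' N' := by
  ext i j
  rcases fin_cases' i with ⟨k, rfl⟩ | rfl
  · rw [Matrix.add_apply, recon_top, recon_top, recon_top, rowExt_add]
  · rw [Matrix.add_apply, recon_bot, recon_bot, recon_bot, Pi.add_apply,
      Finset.sum_congr rfl (fun k (_ : k ∈ Finset.univ) => rowExt_add Y a a' c c' N N' k j),
      Finset.sum_add_distrib]
    ring

lemma recon_smul (Y a b c : Fin (m+2) → ℝ) (N : Matrix (Fin (m+1)) (Fin m) ℝ) (t : ℝ) :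
    recon Y (t • a) (t • b) (t • c) (t • N) = t • recon Y a b c N := by
  ext i j
  rcases fin_cases' i with ⟨k, rfl⟩ | rfl
  · rw [Matrix.smul_apply, recon_top, recon_top, rowExt_smul, smul_eq_mul]
  · rw [Matrix.smul_apply, recon_bot, recon_bot,
      Finset.sum_congr rfl (fun k (_ : k ∈ Finset.univ) => rowExt_smul Y a c N t k j)]
    simp only [Pi.smul_apply, smul_eq_mul, ← Finset.mul_sum]
    ring


/-- The homogeneous solution space. -/
def V (Y : Fin (m+2) → ℝ) : Submodule ℝ (Matrix (Fin (m+2)) (Fin (m+2)) ℝ) where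
  carrier := {M | (∀ i, ∑ j, M i j = 0) ∧ (∀ j, ∑ i, M i j = 0) ∧
    (∀ i, ∑ j, M i j * Y j = 0)}
  zero_mem' := by simp
  add_mem' := by
    rintro x y ⟨hx1, hx2, hx3⟩ ⟨hy1, hy2, hy3⟩
    refine ⟨fun i => ?_, fun j => ?_, fun i => ?_⟩
    · simp [Matrix.add_apply, Finset.sum_add_distrib, hx1 i, hy1 i]
    · simp [Matrix.add_apply, Finset.sum_add_distrib, hx2 j, hy2 j]
    · simp [Matrix.add_apply, add_mul, Finset.sum_add_distrib, hx3 i, hy3 i]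
  smul_mem' := by
    rintro t x ⟨hx1, hx2, hx3⟩
    refine ⟨fun i => ?_, fun j => ?_, fun i => ?_⟩
    · simp [Matrix.smul_apply, smul_eq_mul, ← Finset.mul_sum, hx1 i]
    · simp [Matrix.smul_apply, smul_eq_mul, ← Finset.mul_sum, hx2 j]
    · simp [Matrix.smul_apply, smul_eq_mul, mul_assoc, ← Finset.mul_sum, hx3 i]

/-- Linear parametrisation of the homogeneous space by the corner block. -/
def equivV (Y : Fin (m+2) → ℝ) (hY : Y ⟨m, by omega⟩ ≠ Y ⟨m+1, by omega⟩) :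
    Matrix (Fin (m+1)) (Fin m) ℝ ≃ₗ[ℝ] V Y where
  toFun N := ⟨recon Y 0 0 0 N, recon_mem Y 0 0 0 N hY (by simp) (by simp)⟩
  map_add' N N' := Subtype.ext (by
    have h := recon_add Y 0 0 0 0 0 0 N N'
    simpa using h)
  map_smul' t N := Subtype.ext (by
    have h := recon_smul Y 0 0 0 N t
    simpa using h)
  invFun M := Matrix.of fun i j => (M : Matrix (Fin (m+2)) (Fin (m+2)) ℝ) ⟨i, by omega⟩ ⟨j, by omega⟩
  left_inv N := by
    ext i j
    exact recon_castLE Y 0 0 0 N i j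
  right_inv M := Subtype.ext
    (recon_unique Y 0 0 0 (M : Matrix (Fin (m+2)) (Fin (m+2)) ℝ) hY M.2.1 M.2.2.1 M.2.2.2)

lemma finrank_V (Y : Fin (m+2) → ℝ) (hY : Y ⟨m, by omega⟩ ≠ Y ⟨m+1, by omega⟩) :
    Module.finrank ℝ (V Y) = (m+1) * m := by
  rw [← (equivV Y hY).finrank_eq]
  simp [Module.finrank_matrix]

end MGHelp

open MGHelp

/-- the space `Γ` of martingale transport matrices is an affine space of
dimension `(n-1)(n-2)`, affinely parametrised by the upper-left `(n-1) × (n-2)` submatrix. -/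
theorem martingale_matrices_affine (n : ℕ) (hn : 2 ≤ n) (X Y A B : Fin n → ℝ)
    (hA1 : ∑ i, A i = 1) (hAX : ∑ i, A i * X i = 0)
    (hB1 : ∑ j, B j = 1) (hBY : ∑ j, B j * Y j = 0)
    (hX : Function.Injective X) (hY : Function.Injective Y) :
    Set.BijOn
      (fun M : Matrix (Fin n) (Fin n) ℝ =>
        Matrix.of fun (i : Fin (n - 1)) (j : Fin (n - 2)) =>
          M (Fin.castLE (by omega) i) (Fin.castLE (by omega) j))
      {M : Matrix (Fin n) (Fin n) ℝ |
        (∀ i, ∑ j, M i j = A i) ∧ (∀ j, ∑ i, M i j = B j) ∧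
        (∀ i, ∑ j, M i j * Y j = A i * X i)}
      Set.univ ∧
    ∃ S : AffineSubspace ℝ (Matrix (Fin n) (Fin n) ℝ),
      (S : Set (Matrix (Fin n) (Fin n) ℝ)) =
        {M : Matrix (Fin n) (Fin n) ℝ |
          (∀ i, ∑ j, M i j = A i) ∧ (∀ j, ∑ i, M i j = B j) ∧
          (∀ i, ∑ j, M i j * Y j = A i * X i)} ∧
      Module.finrank ℝ S.direction = (n - 1) * (n - 2) := by
  obtain ⟨m, rfl⟩ : ∃ m, n = m + 2 := ⟨n - 2, by omega⟩
  have hYne : Y ⟨m, by omega⟩ ≠ Y ⟨m+1, by omega⟩ := fun h => by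
    simpa [Fin.ext_iff] using hY h
  have h1 : ∑ i, A i = ∑ j, B j := hA1.trans hB1.symm
  have h2 : ∑ i, (fun i => A i * X i) i = ∑ j, B j * Y j := by
    simpa using hAX.trans hBY.symm
  obtain ⟨hM01, hM02, hM03⟩ :=
    recon_mem Y A B (fun i => A i * X i) 0 hYne h1 h2
  set M₀ : Matrix (Fin (m+2)) (Fin (m+2)) ℝ := recon Y A B (fun i => A i * X i) 0 with hM₀def
  have hM03' : ∀ i, ∑ j, M₀ i j * Y j = A i * X i := hM03
  constructor
  · refine ⟨fun M _ => Set.mem_univ _, ?_, ?_⟩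
    · -- injectivity
      intro M hM M' hM' hff
      have h : recon Y A B (fun i => A i * X i)
          (Matrix.of fun (i : Fin (m+1)) (j : Fin m) => M ⟨i, by omega⟩ ⟨j, by omega⟩) = M :=
        recon_unique Y A B (fun i => A i * X i) M hYne hM.1 hM.2.1 hM.2.2
      have h' : recon Y A B (fun i => A i * X i)
          (Matrix.of fun (i : Fin (m+1)) (j : Fin m) => M' ⟨i, by omega⟩ ⟨j, by omega⟩) = M' :=
        recon_unique Y A B (fun i => A i * X i) M' hYne hM'.1 hM'.2.1 hM'.2.2
      have key : (Matrix.of fun (i : Fin (m+1)) (j : Fin m) => M ⟨i, by omega⟩ ⟨j, by omega⟩)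
          = Matrix.of fun (i : Fin (m+1)) (j : Fin m) => M' ⟨i, by omega⟩ ⟨j, by omega⟩ := hff
      rw [← h, ← h', key]
    · -- surjectivity
      intro N _
      refine ⟨recon Y A B (fun i => A i * X i) N, ?_, ?_⟩
      · exact recon_mem Y A B (fun i => A i * X i) N hYne h1 h2
      · show (Matrix.of fun (i : Fin (m+1)) (j : Fin m) =>
          recon Y A B (fun i => A i * X i) N ⟨i, by omega⟩ ⟨j, by omega⟩) = N
        ext i j
        exact recon_castLE Y A B (fun i => A i * X i) N i j
  · refine ⟨AffineSubspace.mk' M₀ (V Y), ?_, ?_⟩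
    · ext M
      rw [SetLike.mem_coe, AffineSubspace.mem_mk', vsub_eq_sub]
      constructor
      · rintro ⟨hv1, hv2, hv3⟩
        refine ⟨fun i => ?_, fun j => ?_, fun i => ?_⟩
        · have h := hv1 i
          simp only [Matrix.sub_apply, Finset.sum_sub_distrib, hM01 i] at h
          linarith
        · have h := hv2 j
          simp only [Matrix.sub_apply, Finset.sum_sub_distrib, hM02 j] at h
          linarith
        · have h := hv3 i
          simp only [Matrix.sub_apply, sub_mul, Finset.sum_sub_distrib, hM03' i] at h
          linarith
      · rintro ⟨hm1, hm2, hm3⟩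
        refine ⟨fun i => ?_, fun j => ?_, fun i => ?_⟩
        · simp only [Matrix.sub_apply, Finset.sum_sub_distrib, hM01 i, hm1 i]
          ring
        · simp only [Matrix.sub_apply, Finset.sum_sub_distrib, hM02 j, hm2 j]
          ring
        · simp only [Matrix.sub_apply, sub_mul, Finset.sum_sub_distrib, hM03' i, hm3 i]
          ring
    · rw [AffineSubspace.direction_mk', finrank_V Y hYne]
      congr 1 <;> omega

end
end
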